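/- arXiv:2511.04258 — 5 statements merged into one kernel-verified Lean document; each statement's English description precedes it below -/
import Mathlib

section
/- Let H be a DAG with ℓ edges. Then dtd(H) ≤ ⌊ℓ/5⌋ + 3. -/
open Set

namespace DagPaper

variable {V : Type*}

/-- Adjacency of a digraph restricted to a vertex set `A`. -/
def restrAdj (Adj : V → V → Prop) (A : Set V) : V → V → Prop :=
  fun u v => u ∈ A ∧ v ∈ A ∧ Adj u v

/-- Underlying undirected (symmetrized) adjacency restricted to `A`. -/
def symAdj (Adj : V → V → Prop) (A : Set V) : V → V → Prop :=
  fun u v => restrAdj Adj A u v ∨ restrAdj Adj A v u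

/-- `v` is a source (indegree zero) of the sub-DAG induced on `A`. -/
def IsSource (Adj : V → V → Prop) (A : Set V) (v : V) : Prop :=
  v ∈ A ∧ ∀ u ∈ A, ¬ Adj u v

/-- Vertices reachable from `s` by directed paths inside `A` (including `s`). -/
def Reach (Adj : V → V → Prop) (A : Set V) (s : V) : Set V :=
  {v | Relation.ReflTransGen (restrAdj Adj A) s v}

/-- Vertices reachable from a set of vertices `S` inside `A`. -/
def ReachSet (Adj : V → V → Prop) (A : Set V) (S : Set V) : Set V :=
  ⋃ s ∈ S, Reach Adj A s

/-- Connected component of `v` in the underlying undirected graph induced on `A`. -/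
def Comp (Adj : V → V → Prop) (A : Set V) (v : V) : Set V :=
  {u | Relation.ReflTransGen (symAdj Adj A) v u}

/-- The digraph `Adj` is acyclic. -/
def Acyclic (Adj : V → V → Prop) : Prop := ∀ v, ¬ Relation.TransGen Adj v v

/-- `dtdLE Adj A n`: the sub-DAG induced on `A` admits a DAG elimination forest of
depth at most `n`: each connected component is emptied by repeatedly choosing a
source `s` and deleting `s` together with all vertices reachable from it. -/
inductive dtdLE (Adj : V → V → Prop) : Set V → ℕ → Prop where
  | empty (n : ℕ) : dtdLE Adj ∅ n
  | step (A : Set V) (n : ℕ) (s : V → V)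
      (hs : ∀ v ∈ A, IsSource Adj (Comp Adj A v) (s v))
      (h : ∀ v ∈ A, dtdLE Adj (Comp Adj A v \ Reach Adj (Comp Adj A v) (s v)) n) :
      dtdLE Adj A (n + 1)

/-- DAG treedepth of a DAG: minimum depth of a DAG elimination forest. -/
noncomputable def dtd (Adj : V → V → Prop) : ℕ := sInf {n | dtdLE Adj Set.univ n}

/-- `IsEF Adj A anc n`: there is a DAG elimination forest for the sub-DAG on `A`,
of depth at most `n`, whose ancestor relation is contained in `anc`: whenever a
source `s` is chosen as a root of a component, `anc s u` holds for every vertex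
`u` remaining below it. -/
inductive IsEF (Adj : V → V → Prop) : Set V → (V → V → Prop) → ℕ → Prop where
  | empty (anc : V → V → Prop) (n : ℕ) : IsEF Adj ∅ anc n
  | step (A : Set V) (anc : V → V → Prop) (n : ℕ) (s : V → V)
      (hs : ∀ v ∈ A, IsSource Adj (Comp Adj A v) (s v))
      (hanc : ∀ v ∈ A, ∀ u ∈ Comp Adj A v \ Reach Adj (Comp Adj A v) (s v), anc (s v) u)
      (h : ∀ v ∈ A, IsEF Adj (Comp Adj A v \ Reach Adj (Comp Adj A v) (s v)) anc n) :
      IsEF Adj A anc (n + 1)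

/-- `Adj` is an acyclic orientation of the undirected simple graph `G`. -/
structure IsAcyclicOrientation (G : SimpleGraph V) (Adj : V → V → Prop) : Prop where
  subset : ∀ u v, Adj u v → G.Adj u v
  covers : ∀ u v, G.Adj u v → Adj u v ∨ Adj v u
  antisymm : ∀ u v, Adj u v → ¬ Adj v u
  acyclic : Acyclic Adj

/-- `tdLE G A n`: the subgraph of `G` induced on `A` admits an elimination forest of
depth at most `n` (classical treedepth). -/
inductive tdLE (G : SimpleGraph V) : Set V → ℕ → Prop where
  | empty (n : ℕ) : tdLE G ∅ n
  | step (A : Set V) (n : ℕ) (r : V → V)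
      (hr : ∀ v ∈ A, r v ∈ Comp G.Adj A v)
      (h : ∀ v ∈ A, tdLE G (Comp G.Adj A v \ {r v}) n) :
      tdLE G A (n + 1)

/-- Treedepth of an undirected graph. -/
noncomputable def td (G : SimpleGraph V) : ℕ := sInf {n | tdLE G Set.univ n}

/-- `I` is a minor of `H`, via branch sets. -/
def IsMinor {W : Type*} (I : SimpleGraph W) (H : SimpleGraph V) : Prop :=
  ∃ B : W → Set V, (∀ a, (B a).Nonempty) ∧
    (∀ a, ∀ x ∈ B a, ∀ y ∈ B a,
      Relation.ReflTransGen (fun p q => p ∈ B a ∧ q ∈ B a ∧ H.Adj p q) x y) ∧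
    (∀ a b, a ≠ b → Disjoint (B a) (B b)) ∧
    (∀ a b, I.Adj a b → ∃ x ∈ B a, ∃ y ∈ B b, H.Adj x y)

/-- `I` is an induced minor of `H` (vertex deletions and edge contractions),
via branch sets. -/
def IsInducedMinor {W : Type*} (I : SimpleGraph W) (H : SimpleGraph V) : Prop :=
  ∃ B : W → Set V, (∀ a, (B a).Nonempty) ∧
    (∀ a, ∀ x ∈ B a, ∀ y ∈ B a,
      Relation.ReflTransGen (fun p q => p ∈ B a ∧ q ∈ B a ∧ H.Adj p q) x y) ∧
    (∀ a b, a ≠ b → Disjoint (B a) (B b)) ∧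
    (∀ a b, a ≠ b → (I.Adj a b ↔ ∃ x ∈ B a, ∃ y ∈ B b, H.Adj x y))

/-- `G'` is obtained from `G` by contracting the single edge `{u, v}`, with
quotient map `f`. -/
def IsEdgeContraction {W : Type*} (G : SimpleGraph V) (G' : SimpleGraph W)
    (f : V → W) (u v : V) : Prop :=
  G.Adj u v ∧ f u = f v ∧ Function.Surjective f ∧
  (∀ x y, f x = f y → x ≠ y → (x = u ∧ y = v) ∨ (x = v ∧ y = u)) ∧
  (∀ a b, G'.Adj a b ↔ a ≠ b ∧ ∃ x y, f x = a ∧ f y = b ∧ G.Adj x y)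

/-- `k` lies on the (unique, in a tree) path between `i` and `j`:
every walk from `i` to `j` passes through `k`. -/
def OnPath {ι : Type*} (T : SimpleGraph ι) (i k j : ι) : Prop :=
  ∀ p : T.Walk i j, k ∈ p.support

/-- A DAG tree decomposition of the DAG `Adj` (Bressan). -/
structure DagTreeDecomp (Adj : V → V → Prop) (ι : Type*) where
  tree : SimpleGraph ι
  conn : tree.Connected
  acyc : tree.IsAcyclic
  bags : ι → Set V
  bags_sources : ∀ i, ∀ v ∈ bags i, IsSource Adj Set.univ v
  cover : ∀ v, IsSource Adj Set.univ v → ∃ i, v ∈ bags i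
  reach : ∀ i k j, OnPath tree i k j →
    ReachSet Adj Set.univ (bags i) ∩ ReachSet Adj Set.univ (bags j)
      ⊆ ReachSet Adj Set.univ (bags k)

/-- The DAG has a DAG tree decomposition of width (max bag size) at most `w`. -/
def dtwLE (Adj : V → V → Prop) (w : ℕ) : Prop :=
  ∃ (ι : Type) (D : DagTreeDecomp Adj ι), ∀ i, (D.bags i).ncard ≤ w

/-- DAG treewidth of a DAG. -/
noncomputable def dtw (Adj : V → V → Prop) : ℕ := sInf {w | dtwLE Adj w}

/-- A tree decomposition of an undirected graph. -/
structure TreeDecomp (G : SimpleGraph V) (ι : Type*) where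
  tree : SimpleGraph ι
  conn : tree.Connected
  acyc : tree.IsAcyclic
  bags : ι → Set V
  vcover : ∀ v, ∃ i, v ∈ bags i
  ecover : ∀ u v, G.Adj u v → ∃ i, u ∈ bags i ∧ v ∈ bags i
  vconn : ∀ v i k j, v ∈ bags i → v ∈ bags j → OnPath tree i k j → v ∈ bags k

/-- `G` has a tree decomposition of width at most `w` (bags of size ≤ w + 1). -/
def twLE (G : SimpleGraph V) (w : ℕ) : Prop :=
  ∃ (ι : Type) (D : TreeDecomp G ι), ∀ i, (D.bags i).ncard ≤ w + 1

/-- Treewidth of an undirected graph. -/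
noncomputable def tw (G : SimpleGraph V) : ℕ := sInf {w | twLE G w}

/-- A generalized hypertree decomposition of the hypergraph with hyperedge set `E`. -/
structure GHD {Vh : Type*} (E : Set (Set Vh)) (ι : Type*) where
  tree : SimpleGraph ι
  conn : tree.Connected
  acyc : tree.IsAcyclic
  vbags : ι → Set Vh
  ecov : ι → Set (Set Vh)
  ecov_mem : ∀ i, ecov i ⊆ E
  edge_cover : ∀ e ∈ E, ∃ i, e ⊆ vbags i
  vconn : ∀ v i k j, v ∈ vbags i → v ∈ vbags j → OnPath tree i k j → v ∈ vbags k
  guard : ∀ i, vbags i ⊆ ⋃ e ∈ ecov i, e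

/-- The hypergraph has a generalized hypertree decomposition of width at most `w`. -/
def ghwLE {Vh : Type*} (E : Set (Set Vh)) (w : ℕ) : Prop :=
  ∃ (ι : Type) (D : GHD E ι), ∀ i, (D.ecov i).ncard ≤ w

/-- Generalized hypertree width. -/
noncomputable def ghw {Vh : Type*} (E : Set (Set Vh)) : ℕ := sInf {w | ghwLE E w}

section Infra
set_option linter.unusedSectionVars false

open Relation

variable {V : Type*} [Fintype V] {Adj : V → V → Prop}

/-! ### Basic well-foundedness from acyclicity -/

lemma acyclic_wf (hacyc : Acyclic Adj) :
    WellFounded (fun a b => Relation.TransGen Adj a b) := by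
  have : IsIrrefl V (fun a b => Relation.TransGen Adj a b) := ⟨fun v h => hacyc v h⟩
  have : IsTrans V (fun a b => Relation.TransGen Adj a b) :=
    ⟨fun a b c h1 h2 => h1.trans h2⟩
  exact Finite.wellFounded_of_trans_of_irrefl _

/-- A finite nonempty set has a ≺-minimal element (no in-edge from within S reaching it). -/
lemma exists_min_mem (hacyc : Acyclic Adj) {S : Set V} (hS : S.Nonempty) :
    ∃ y ∈ S, ∀ u ∈ S, ¬ Relation.TransGen Adj u y := by
  obtain ⟨y, hy, hmin⟩ := (acyclic_wf hacyc).has_min S hS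
  exact ⟨y, hy, fun u hu h => hmin u hu h⟩

/-! ### Reach lemmas -/

lemma reach_self (A : Set V) (s : V) : s ∈ Reach Adj A s := ReflTransGen.refl

lemma reach_subset {A : Set V} {s : V} (hs : s ∈ A) : Reach Adj A s ⊆ A := by
  intro x hx
  induction hx with
  | refl => exact hs
  | tail _ h ih => exact h.2.1

/-- Reach is closed under out-edges within A. -/
lemma reach_closed {A : Set V} {s u v : V} (hu : u ∈ Reach Adj A s)
    (hv : v ∈ A) (huv : Adj u v) (huA : u ∈ A) : v ∈ Reach Adj A s :=
  ReflTransGen.tail hu ⟨huA, hv, huv⟩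

lemma reach_mono {A B : Set V} (hAB : A ⊆ B) (s : V) :
    Reach Adj A s ⊆ Reach Adj B s := by
  intro x hx
  induction hx with
  | refl => exact ReflTransGen.refl
  | tail _ h ih => exact ReflTransGen.tail ih ⟨hAB h.1, hAB h.2.1, h.2.2⟩

/-- If x is in the reach of s and x ≠ s then x has an in-edge from within the reach. -/
lemma reach_in_edge {A : Set V} {s x : V} (hx : x ∈ Reach Adj A s) (hxs : x ≠ s) :
    ∃ u ∈ Reach Adj A s, u ∈ A ∧ x ∈ A ∧ Adj u x := by
  cases hx with
  | refl => exact absurd rfl hxs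
  | tail h1 h2 => exact ⟨_, h1, h2.1, h2.2.1, h2.2.2⟩

/-- A source of A belonging to somebody's reach must be that somebody. -/
lemma source_mem_reach {A : Set V} {s t : V} (ht : IsSource Adj A t)
    (h : t ∈ Reach Adj A s) : t = s := by
  cases h with
  | refl => rfl
  | tail h1 h2 => exact absurd h2.2.2 (ht.2 _ h2.1)

/-- Every vertex of A is in the reach of some source of A. -/
lemma exists_source_reach (hacyc : Acyclic Adj) {A : Set V} :
    ∀ x ∈ A, ∃ s, IsSource Adj A s ∧ x ∈ Reach Adj A s := by
  intro x hx
  induction x using (acyclic_wf hacyc).induction with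
  | _ x ih =>
    by_cases hsrc : ∀ u ∈ A, ¬ Adj u x
    · exact ⟨x, ⟨hx, hsrc⟩, reach_self A x⟩
    · push_neg at hsrc
      obtain ⟨u, hu, hadj⟩ := hsrc
      obtain ⟨s, hs, hreach⟩ := ih u (Relation.TransGen.single hadj) hu
      exact ⟨s, hs, reach_closed hreach hx hadj hu⟩

/-! ### Comp lemmas -/

lemma comp_self_mem {A : Set V} {v : V} : v ∈ Comp Adj A v := ReflTransGen.refl

lemma symAdj_mem_left {A : Set V} {u v : V} (h : symAdj Adj A u v) : u ∈ A := by
  rcases h with h | h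
  · exact h.1
  · exact h.2.1

lemma symAdj_mem_right {A : Set V} {u v : V} (h : symAdj Adj A u v) : v ∈ A := by
  rcases h with h | h
  · exact h.2.1
  · exact h.1

lemma symAdj_symm {A : Set V} {u v : V} (h : symAdj Adj A u v) : symAdj Adj A v u :=
  h.symm

lemma comp_subset {A : Set V} {v : V} (hv : v ∈ A) : Comp Adj A v ⊆ A := by
  intro x hx
  induction hx with
  | refl => exact hv
  | tail _ h ih => exact symAdj_mem_right h

lemma mem_comp_trans {A : Set V} {v x y : V} (hx : x ∈ Comp Adj A v)
    (hy : y ∈ Comp Adj A x) : y ∈ Comp Adj A v := hx.trans hy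

lemma mem_comp_symm {A : Set V} {v x : V} (hx : x ∈ Comp Adj A v) :
    v ∈ Comp Adj A x := by
  induction hx with
  | refl => exact ReflTransGen.refl
  | tail _ h ih => exact ReflTransGen.head (symAdj_symm h) ih

lemma comp_eq_of_mem {A : Set V} {v x : V} (hx : x ∈ Comp Adj A v) :
    Comp Adj A x = Comp Adj A v := by
  ext y
  constructor
  · intro hy; exact mem_comp_trans hx hy
  · intro hy; exact mem_comp_trans (mem_comp_symm hx) hy

/-- Walks within a component stay in the component: restricting symAdj to the
component does not lose connectivity. -/
lemma comp_walk_restrict {A : Set V} {v : V} (hv : v ∈ A) :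
    ∀ x ∈ Comp Adj A v, Relation.ReflTransGen (symAdj Adj (Comp Adj A v)) v x := by
  intro x hx
  induction hx with
  | refl => exact ReflTransGen.refl
  | @tail b c hb hbc ih =>
    refine ReflTransGen.tail ih ?_
    have hbmem : b ∈ Comp Adj A v := hb
    have hcmem : c ∈ Comp Adj A v := ReflTransGen.tail hb hbc
    rcases hbc with h | h
    · exact Or.inl ⟨hbmem, hcmem, h.2.2⟩
    · exact Or.inr ⟨hcmem, hbmem, h.2.2⟩

lemma symAdj_mono {A B : Set V} (hAB : A ⊆ B) {u v : V} (h : symAdj Adj A u v) :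
    symAdj Adj B u v := by
  rcases h with h | h
  · exact Or.inl ⟨hAB h.1, hAB h.2.1, h.2.2⟩
  · exact Or.inr ⟨hAB h.1, hAB h.2.1, h.2.2⟩

lemma comp_mono {A B : Set V} (hAB : A ⊆ B) (v : V) :
    Comp Adj A v ⊆ Comp Adj B v := by
  intro x hx
  induction hx with
  | refl => exact ReflTransGen.refl
  | tail _ h ih => exact ReflTransGen.tail ih (symAdj_mono hAB h)

/-- Comp is idempotent. -/
lemma comp_idem {A : Set V} {v x : V} (hv : v ∈ A) (hx : x ∈ Comp Adj A v) :
    Comp Adj (Comp Adj A v) x = Comp Adj A x := by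
  apply Set.Subset.antisymm
  · exact comp_mono (comp_subset hv) x
  · rw [comp_eq_of_mem hx]
    intro y hy
    have h1 : x ∈ Comp Adj (Comp Adj A v) v := comp_walk_restrict hv x hx
    have h2 : y ∈ Comp Adj (Comp Adj A v) v := comp_walk_restrict hv y hy
    exact (mem_comp_symm h1).trans h2

end Infra
section DtdLE
set_option linter.unusedSectionVars false
set_option linter.unusedVariables false

open Relation

variable {V : Type*} [Fintype V] {Adj : V → V → Prop}

lemma dtdLE_mono {A : Set V} {n m : ℕ} (h : dtdLE Adj A n) (hnm : n ≤ m) :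
    dtdLE Adj A m := by
  induction h generalizing m with
  | empty n => exact dtdLE.empty m
  | step A n s hs hres ih =>
    obtain ⟨m', rfl⟩ : ∃ m', m = m' + 1 := ⟨m - 1, by omega⟩
    exact dtdLE.step A m' s hs (fun v hv => ih v hv (by omega))

lemma dtdLE_zero {A : Set V} (h : dtdLE Adj A 0) : A = ∅ := by
  cases h
  rfl

lemma dtdLE_step_inv {B : Set V} {n : ℕ} (h : dtdLE Adj B (n + 1)) :
    B = ∅ ∨ ∃ s : V → V, (∀ v ∈ B, IsSource Adj (Comp Adj B v) (s v)) ∧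
      ∀ v ∈ B, dtdLE Adj (Comp Adj B v \ Reach Adj (Comp Adj B v) (s v)) n := by
  cases h with
  | empty => exact Or.inl rfl
  | step _ _ s hs hres => exact Or.inr ⟨s, hs, hres⟩

/-- Combine: if each component satisfies dtdLE with bound n, so does the union. -/
lemma dtdLE_combine {A : Set V} {n : ℕ}
    (h : ∀ v ∈ A, dtdLE Adj (Comp Adj A v) n) : dtdLE Adj A n := by
  classical
  rcases Set.eq_empty_or_nonempty A with rfl | ⟨v0, hv0⟩
  · exact dtdLE.empty n
  cases n with
  | zero =>
    exact absurd (comp_self_mem) (by rw [dtdLE_zero (h v0 hv0)]; exact Set.notMem_empty _)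
  | succ n =>
    -- for each v ∈ A, invert the step for Comp A v
    have key : ∀ v ∈ A, ∃ s, IsSource Adj (Comp Adj A v) s ∧
        dtdLE Adj (Comp Adj A v \ Reach Adj (Comp Adj A v) s) n := by
      intro v hv
      rcases dtdLE_step_inv (h v hv) with hemp | ⟨s, hs, hres⟩
      · exact absurd (comp_self_mem (A := A) (v := v)) (by rw [hemp]; exact Set.notMem_empty _)
      have hvmem : v ∈ Comp Adj A v := comp_self_mem
      have hcomp : Comp Adj (Comp Adj A v) v = Comp Adj A v := by
        rw [comp_idem hv comp_self_mem]
      refine ⟨s v, ?_, ?_⟩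
      · have := hs v hvmem; rwa [hcomp] at this
      · have := hres v hvmem; rwa [hcomp] at this
    choose f hf1 hf2 using key
    refine dtdLE.step A n (fun v => if hv : v ∈ A then f v hv else v) ?_ ?_
    · intro v hv; simp only [dif_pos hv]; exact hf1 v hv
    · intro v hv; simp only [dif_pos hv]; exact hf2 v hv

/-- A set that is its own full reach from a source has dtdLE 1. -/
lemma dtdLE_one_of_full_reach {C : Set V} {s : V} (hs : IsSource Adj C s)
    (hfull : C ⊆ Reach Adj C s) (hcomp : ∀ x ∈ C, Comp Adj C x = C) {n : ℕ} :
    dtdLE Adj C (n + 1) := by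
  refine dtdLE.step C n (fun _ => s) ?_ ?_
  · intro v hv; rw [hcomp v hv]; exact hs
  · intro v hv; rw [hcomp v hv]
    have : C \ Reach Adj C s = ∅ := by
      ext x; simp only [Set.mem_diff, Set.mem_empty_iff_false, iff_false, not_and, not_not]
      intro hx; exact hfull hx
    rw [this]; exact dtdLE.empty n

end DtdLE
section Count
set_option linter.unusedSectionVars false
set_option linter.unusedVariables false

open Relation

variable {V : Type*} [Fintype V] {Adj : V → V → Prop}

/-- Edges inside a vertex set. -/
def Edges (Adj : V → V → Prop) (X : Set V) : Set (V × V) :=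
  {p | p.1 ∈ X ∧ p.2 ∈ X ∧ Adj p.1 p.2}

/-- In-degree of y within C. -/
noncomputable def Indeg (Adj : V → V → Prop) (C : Set V) (y : V) : ℕ :=
  {u | u ∈ C ∧ Adj u y}.ncard

/-- Hubs: vertices of indegree ≥ 2 within C. -/
def Hb (Adj : V → V → Prop) (C : Set V) : Set V :=
  {y | y ∈ C ∧ 2 ≤ Indeg Adj C y}

/-- Edges of C with head in a subset R (the edges destroyed when R is removed). -/
def IncE (Adj : V → V → Prop) (C R : Set V) : Set (V × V) :=
  {p | p.1 ∈ C ∧ p.2 ∈ R ∧ Adj p.1 p.2}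

lemma edges_mono {X Y : Set V} (h : X ⊆ Y) :
    (Edges Adj X).ncard ≤ (Edges Adj Y).ncard :=
  Set.ncard_le_ncard (fun p hp => ⟨h hp.1, h hp.2.1, hp.2.2⟩) (Set.toFinite _)

/-- Splitting of edges when removing a reach-closed set. -/
lemma edges_split {C : Set V} {s : V} (hs : s ∈ C) :
    (Edges Adj C).ncard
      = (Edges Adj (C \ Reach Adj C s)).ncard + (IncE Adj C (Reach Adj C s)).ncard := by
  classical
  have hsub : Reach Adj C s ⊆ C := reach_subset hs
  have hcover : Edges Adj C = Edges Adj (C \ Reach Adj C s) ∪ IncE Adj C (Reach Adj C s) := by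
    ext p
    constructor
    · rintro ⟨h1, h2, h3⟩
      by_cases hp2 : p.2 ∈ Reach Adj C s
      · exact Or.inr ⟨h1, hp2, h3⟩
      · have hp1 : p.1 ∉ Reach Adj C s := fun hin => hp2 (reach_closed hin h2 h3 h1)
        exact Or.inl ⟨⟨h1, hp1⟩, ⟨h2, hp2⟩, h3⟩
    · rintro (⟨h1, h2, h3⟩ | ⟨h1, h2, h3⟩)
      · exact ⟨h1.1, h2.1, h3⟩
      · exact ⟨h1, hsub h2, h3⟩
  have hdisj : Disjoint (Edges Adj (C \ Reach Adj C s)) (IncE Adj C (Reach Adj C s)) := by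
    rw [Set.disjoint_left]
    rintro p ⟨_, h2, _⟩ ⟨_, h2', _⟩
    exact h2.2 h2'
  rw [hcover, Set.ncard_union_eq hdisj (Set.toFinite _) (Set.toFinite _)]

/-- The fiber of IncE over a head y has cardinality Indeg y. -/
lemma fiber_card {C R : Set V} {y : V} (hy : y ∈ R) :
    {p | p ∈ IncE Adj C R ∧ p.2 = y}.ncard = Indeg Adj C y := by
  classical
  have : {p | p ∈ IncE Adj C R ∧ p.2 = y} = (fun u => (u, y)) '' {u | u ∈ C ∧ Adj u y} := by
    ext ⟨a, b⟩
    simp only [Set.mem_setOf_eq, Set.mem_image, IncE]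
    constructor
    · rintro ⟨⟨h1, h2, h3⟩, rfl⟩; exact ⟨a, ⟨h1, h3⟩, rfl⟩
    · rintro ⟨u, ⟨h1, h3⟩, heq⟩
      obtain ⟨rfl, rfl⟩ : u = a ∧ y = b := ⟨congrArg Prod.fst heq, congrArg Prod.snd heq⟩
      exact ⟨⟨h1, hy, h3⟩, rfl⟩
  rw [this, Set.ncard_image_of_injective _ (fun a b hab => congrArg Prod.fst hab)]
  rfl

/-- Sum of indegrees of two distinct heads in R is at most the removed edge count. -/
lemma indeg_pair_le {C R : Set V} {y z : V} (hy : y ∈ R) (hz : z ∈ R) (hyz : y ≠ z) :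
    Indeg Adj C y + Indeg Adj C z ≤ (IncE Adj C R).ncard := by
  classical
  rw [← fiber_card (Adj := Adj) (C := C) hy, ← fiber_card (Adj := Adj) (C := C) hz]
  have hdisj : Disjoint {p | p ∈ IncE Adj C R ∧ p.2 = y} {p | p ∈ IncE Adj C R ∧ p.2 = z} := by
    rw [Set.disjoint_left]; rintro p ⟨_, h1⟩ ⟨_, h2⟩; exact hyz (h1 ▸ h2)
  rw [← Set.ncard_union_eq hdisj (Set.toFinite _) (Set.toFinite _)]
  exact Set.ncard_le_ncard (by rintro p (⟨h, _⟩ | ⟨h, _⟩) <;> exact h) (Set.toFinite _)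

lemma indeg_single_le {C R : Set V} {y : V} (hy : y ∈ R) :
    Indeg Adj C y ≤ (IncE Adj C R).ncard := by
  classical
  rw [← fiber_card (Adj := Adj) (C := C) hy]
  exact Set.ncard_le_ncard (fun p hp => hp.1) (Set.toFinite _)

/-- Generic: if every member of H has ≥ 2 in-fiber elements within S, then 2|H| ≤ |S|. -/
lemma two_mul_le_of_fibers {H : Set V} {S : Set (V × V)}
    (h : ∀ y ∈ H, 2 ≤ {p | p ∈ S ∧ p.2 = y}.ncard) : 2 * H.ncard ≤ S.ncard := by
  classical
  generalize hn : H.ncard = n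
  induction n generalizing H S with
  | zero => simp
  | succ n ih =>
    have hne : H.Nonempty := by
      rw [Set.nonempty_iff_ne_empty]; intro he; rw [he] at hn; simp at hn
    obtain ⟨a, ha⟩ := hne
    set S' : Set (V × V) := {p | p ∈ S ∧ p.2 ≠ a} with hS'
    have hsplit : S.ncard = S'.ncard + {p | p ∈ S ∧ p.2 = a}.ncard := by
      have hcov : S = S' ∪ {p | p ∈ S ∧ p.2 = a} := by
        ext p; by_cases hpa : p.2 = a <;> simp [hS', hpa]
      have hdisj : Disjoint S' {p | p ∈ S ∧ p.2 = a} := by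
        rw [Set.disjoint_left]; rintro p ⟨_, hne⟩ ⟨_, he⟩; exact hne he
      nth_rewrite 1 [hcov]
      rw [Set.ncard_union_eq hdisj (Set.toFinite _) (Set.toFinite _)]
    have hfib : ∀ y ∈ H \ {a}, 2 ≤ {p | p ∈ S' ∧ p.2 = y}.ncard := by
      intro y hy
      have hne : y ≠ a := hy.2
      have heq : {p | p ∈ S' ∧ p.2 = y} = {p | p ∈ S ∧ p.2 = y} := by
        ext p; simp only [Set.mem_setOf_eq, hS']
        constructor
        · rintro ⟨⟨h1, _⟩, h2⟩; exact ⟨h1, h2⟩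
        · rintro ⟨h1, h2⟩; exact ⟨⟨h1, h2 ▸ hne⟩, h2⟩
      rw [heq]; exact h y hy.1
    have hcard : (H \ {a}).ncard = n := by
      have := Set.ncard_diff_singleton_of_mem ha
      omega
    have h2a : 2 ≤ {p | p ∈ S ∧ p.2 = a}.ncard := h a ha
    have := ih hfib hcard
    omega

/-- Twice the number of hubs is at most the number of edges. -/
lemma two_mul_hb_le_edges (C : Set V) :
    2 * (Hb Adj C).ncard ≤ (Edges Adj C).ncard := by
  classical
  apply two_mul_le_of_fibers
  intro y hy
  have : {p | p ∈ Edges Adj C ∧ p.2 = y} = (fun u => (u, y)) '' {u | u ∈ C ∧ Adj u y} := by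
    ext ⟨a, b⟩
    simp only [Set.mem_setOf_eq, Set.mem_image, Edges]
    constructor
    · rintro ⟨⟨h1, h2, h3⟩, rfl⟩; exact ⟨a, ⟨h1, h3⟩, rfl⟩
    · rintro ⟨u, ⟨h1, h3⟩, heq⟩
      obtain ⟨rfl, rfl⟩ : u = a ∧ y = b := ⟨congrArg Prod.fst heq, congrArg Prod.snd heq⟩
      exact ⟨⟨h1, hy.1, h3⟩, rfl⟩
  rw [this, Set.ncard_image_of_injective _ (fun a b hab => congrArg Prod.fst hab)]
  exact hy.2

end Count
section WorldSec
set_option linter.unusedSectionVars false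
set_option linter.unusedVariables false

open Relation

variable {V : Type*} [Fintype V] {Adj : V → V → Prop}

/-- A "world": a union-of-its-own-components set in which every source removes
at most 4 edges. -/
structure World (Adj : V → V → Prop) (C : Set V) : Prop where
  comp : ∀ x ∈ C, Comp Adj C x = C
  as : ∀ s, IsSource Adj C s → (IncE Adj C (Reach Adj C s)).ncard ≤ 4

/-- Neighbouring hubs: hubs co-inhabiting a region with y. -/
def Nbr (Adj : V → V → Prop) (C : Set V) (y : V) : Set V :=
  {z | z ∈ Hb Adj C ∧ z ≠ y ∧ ∃ s, IsSource Adj C s ∧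
    y ∈ Reach Adj C s ∧ z ∈ Reach Adj C s}

variable {C : Set V}

lemma indeg_triple_le {R : Set V} {y z w : V} (hy : y ∈ R) (hz : z ∈ R) (hw : w ∈ R)
    (hyz : y ≠ z) (hyw : y ≠ w) (hzw : z ≠ w) :
    Indeg Adj C y + Indeg Adj C z + Indeg Adj C w ≤ (IncE Adj C R).ncard := by
  classical
  rw [← fiber_card (Adj := Adj) (C := C) hy, ← fiber_card (Adj := Adj) (C := C) hz,
    ← fiber_card (Adj := Adj) (C := C) hw]
  have d1 : Disjoint {p | p ∈ IncE Adj C R ∧ p.2 = y} {p | p ∈ IncE Adj C R ∧ p.2 = z} := by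
    rw [Set.disjoint_left]; rintro p ⟨_, h1⟩ ⟨_, h2⟩; exact hyz (h1 ▸ h2)
  have d2 : Disjoint ({p | p ∈ IncE Adj C R ∧ p.2 = y} ∪ {p | p ∈ IncE Adj C R ∧ p.2 = z})
      {p | p ∈ IncE Adj C R ∧ p.2 = w} := by
    rw [Set.disjoint_left]
    rintro p (⟨_, h1⟩ | ⟨_, h1⟩) ⟨_, h2⟩
    · exact hyw (h1 ▸ h2)
    · exact hzw (h1 ▸ h2)
  rw [← Set.ncard_union_eq d1 (Set.toFinite _) (Set.toFinite _),
    ← Set.ncard_union_eq d2 (Set.toFinite _) (Set.toFinite _)]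
  refine Set.ncard_le_ncard ?_ (Set.toFinite _)
  rintro p ((⟨h, _⟩ | ⟨h, _⟩) | ⟨h, _⟩) <;> exact h

/-- Any shared vertex of two distinct regions yields a shared hub. -/
lemma overlap_hub (hacyc : Acyclic Adj) {s t x : V}
    (hs : IsSource Adj C s) (ht : IsSource Adj C t) (hst : s ≠ t)
    (hxs : x ∈ Reach Adj C s) (hxt : x ∈ Reach Adj C t) :
    ∃ h, h ∈ Reach Adj C s ∧ h ∈ Reach Adj C t ∧ h ∈ Hb Adj C := by
  classical
  have hne : (Reach Adj C s ∩ Reach Adj C t).Nonempty := ⟨x, hxs, hxt⟩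
  obtain ⟨h, ⟨hhs, hht⟩, hmin⟩ := exists_min_mem hacyc hne
  have hhs' : h ≠ s := fun e => hst (by rw [e] at hht; exact (source_mem_reach hs hht))
  have hht' : h ≠ t := fun e => (by rw [e] at hhs; exact hst (source_mem_reach ht hhs).symm)
  obtain ⟨u, hu, huC, hhC, hadj⟩ := reach_in_edge hhs hhs'
  obtain ⟨u', hu', hu'C, _, hadj'⟩ := reach_in_edge hht hht'
  have huu' : u ≠ u' := by
    intro e
    subst e
    exact hmin u ⟨hu, hu'⟩ (Relation.TransGen.single hadj)
  refine ⟨h, hhs, hht, hhC, ?_⟩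
  have : 1 < {v | v ∈ C ∧ Adj v h}.ncard := by
    rw [Set.one_lt_ncard_iff (Set.toFinite _)]
    exact ⟨u, u', ⟨huC, hadj⟩, ⟨hu'C, hadj'⟩, huu'⟩
  unfold Indeg
  omega

variable (hacyc : Acyclic Adj) (W : World Adj C)
include hacyc W

/-- Two distinct hubs in one region: both have indegree exactly 2,
and the region is exactly {s, y, z}. -/
lemma region_two_hubs {s y z : V} (hs : IsSource Adj C s)
    (hy : y ∈ Reach Adj C s) (hz : z ∈ Reach Adj C s)
    (hyH : y ∈ Hb Adj C) (hzH : z ∈ Hb Adj C) (hyz : y ≠ z) :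
    Indeg Adj C y = 2 ∧ Indeg Adj C z = 2 ∧
      ∀ v ∈ Reach Adj C s, v = s ∨ v = y ∨ v = z := by
  have hbud := W.as s hs
  have hpair := indeg_pair_le (Adj := Adj) (C := C) hy hz hyz
  have h2y := hyH.2
  have h2z := hzH.2
  refine ⟨by omega, by omega, ?_⟩
  intro v hv
  by_contra hcon
  push_neg at hcon
  obtain ⟨hvs, hvy, hvz⟩ := hcon
  obtain ⟨u, hu, huC, hvC, hadj⟩ := reach_in_edge hv hvs
  have h1v : 1 ≤ Indeg Adj C v := by
    have : ({u} : Set V).ncard ≤ {w | w ∈ C ∧ Adj w v}.ncard :=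
      Set.ncard_le_ncard (by simp [huC, hadj]) (Set.toFinite _)
    simpa [Indeg] using this
  have := indeg_triple_le (Adj := Adj) (C := C) hy hz hv hyz hvy.symm hvz.symm
  omega

/-- Every hub of a region having another co-hub has indegree exactly 2. -/
lemma hub_indeg_eq_two {y : V} (hyH : y ∈ Hb Adj C) (hnbr : (Nbr Adj C y).Nonempty) :
    Indeg Adj C y = 2 := by
  obtain ⟨z, hzH, hzy, s, hs, hys, hzs⟩ := hnbr
  exact (region_two_hubs hacyc W hs hys hzs hyH hzH (Ne.symm hzy)).1

/-- Confinement: if every region meeting P has all its hubs in P,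
then every vertex connected to a P-meeting region lies in a P-meeting region. -/
lemma conf_lemma {P : Set V}
    (hP : ∀ s, IsSource Adj C s → ∀ h, h ∈ Hb Adj C → h ∈ Reach Adj C s →
      (Reach Adj C s ∩ P).Nonempty → h ∈ P)
    {y x : V}
    (hy : ∃ s, IsSource Adj C s ∧ y ∈ Reach Adj C s ∧ (Reach Adj C s ∩ P).Nonempty)
    (hwalk : Relation.ReflTransGen (symAdj Adj C) y x) :
    ∃ s, IsSource Adj C s ∧ x ∈ Reach Adj C s ∧ (Reach Adj C s ∩ P).Nonempty := by
  induction hwalk with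
  | refl => exact hy
  | @tail b c hb hbc ih =>
    obtain ⟨s, hs, hbs, hsP⟩ := ih
    have hbc' : ∃ u v, (u = b ∧ v = c ∨ u = c ∧ v = b) ∧ u ∈ C ∧ v ∈ C ∧ Adj u v := by
      rcases hbc with h | h
      · exact ⟨b, c, Or.inl ⟨rfl, rfl⟩, h.1, h.2.1, h.2.2⟩
      · exact ⟨c, b, Or.inr ⟨rfl, rfl⟩, h.1, h.2.1, h.2.2⟩
    obtain ⟨u, v, hcase, huC, hvC, hadj⟩ := hbc'
    obtain ⟨t, ht, hut⟩ := exists_source_reach hacyc u huC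
    have hvt : v ∈ Reach Adj C t := reach_closed hut hvC hadj huC
    have hbt : b ∈ Reach Adj C t := by rcases hcase with ⟨rfl, rfl⟩ | ⟨rfl, rfl⟩ <;> assumption
    have hct : c ∈ Reach Adj C t := by rcases hcase with ⟨rfl, rfl⟩ | ⟨rfl, rfl⟩ <;> assumption
    by_cases hts : t = s
    · subst hts; exact ⟨t, ht, hct, hsP⟩
    · obtain ⟨h, hhs, hht, hhH⟩ := overlap_hub hacyc hs ht (Ne.symm hts) hbs hbt
      have hhP : h ∈ P := hP s hs h hhH hhs hsP
      exact ⟨t, ht, hct, ⟨h, hht, hhP⟩⟩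

/-- Every vertex of a (connected) world lies in a region meeting P,
provided some region meets P and P-meeting regions have P-confined hubs. -/
lemma conf_all {P : Set V}
    (hP : ∀ s, IsSource Adj C s → ∀ h, h ∈ Hb Adj C → h ∈ Reach Adj C s →
      (Reach Adj C s ∩ P).Nonempty → h ∈ P)
    (hbase : ∃ s, IsSource Adj C s ∧ (Reach Adj C s ∩ P).Nonempty) :
    ∀ x ∈ C, ∃ s, IsSource Adj C s ∧ x ∈ Reach Adj C s ∧
      (Reach Adj C s ∩ P).Nonempty := by
  intro x hx
  obtain ⟨s0, hs0, hs0P⟩ := hbase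
  have hs0C : s0 ∈ C := hs0.1
  have hwalk : Relation.ReflTransGen (symAdj Adj C) s0 x := by
    have : x ∈ Comp Adj C s0 := by rw [W.comp s0 hs0C]; exact hx
    exact this
  exact conf_lemma hacyc W hP ⟨s0, hs0, reach_self C s0, hs0P⟩ hwalk

end WorldSec
section NbrSec
set_option linter.unusedSectionVars false
set_option linter.unusedVariables false

open Relation

variable {V : Type*} [Fintype V] {Adj : V → V → Prop} {C : Set V}

lemma source_indeg {s : V} (hs : IsSource Adj C s) : Indeg Adj C s = 0 := by
  unfold Indeg
  have : {u | u ∈ C ∧ Adj u s} = ∅ := by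
    ext u; simp only [Set.mem_setOf_eq, Set.mem_empty_iff_false, iff_false, not_and]
    exact fun hu => hs.2 u hu
  rw [this, Set.ncard_empty]

lemma hub_ne_source {z s : V} (hz : z ∈ Hb Adj C) (hs : IsSource Adj C s) : z ≠ s := by
  intro e
  subst e
  have h1 := source_indeg (Adj := Adj) hs
  have h2 := hz.2
  omega

lemma adj_ne (hacyc : Acyclic Adj) {u v : V} (h : Adj u v) : u ≠ v := by
  intro e; subst e; exact hacyc u (Relation.TransGen.single h)

variable (hacyc : Acyclic Adj) (W : World Adj C)
include hacyc W

/-- The key degree bound: a hub has at most 2 neighbouring hubs. -/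
lemma nbr_card_le_two {y : V} (hy : y ∈ Hb Adj C) : (Nbr Adj C y).ncard ≤ 2 := by
  classical
  rcases Set.eq_empty_or_nonempty (Nbr Adj C y) with he | hne
  · rw [he]; simp
  have hindeg : Indeg Adj C y = 2 := hub_indeg_eq_two hacyc W hy hne
  -- choose for every neighbour z a region and a tail
  have key : ∀ z ∈ Nbr Adj C y, ∃ u s, u ∈ C ∧ Adj u y ∧ IsSource Adj C s ∧
      y ∈ Reach Adj C s ∧ z ∈ Reach Adj C s ∧ (u = s ∨ u = z) := by
    intro z hz
    obtain ⟨hzH, hzy, s, hs, hys, hzs⟩ := hz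
    have htriple := (region_two_hubs hacyc W hs hys hzs hy hzH (Ne.symm hzy)).2.2
    have hys' : y ≠ s := hub_ne_source hy hs
    obtain ⟨u, hu, huC, hyC, hadj⟩ := reach_in_edge hys hys'
    have huy : u ≠ y := adj_ne hacyc hadj
    rcases htriple u hu with rfl | rfl | rfl
    · exact ⟨u, u, huC, hadj, hs, hys, hzs, Or.inl rfl⟩
    · exact absurd rfl huy
    · exact ⟨u, s, huC, hadj, hs, hys, hzs, Or.inr rfl⟩
  choose f g hf1 hf2 hf3 hf4 hf5 hf6 using key
  have hmap : ∀ z (hz : z ∈ Nbr Adj C y), f z hz ∈ {u | u ∈ C ∧ Adj u y} :=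
    fun z hz => ⟨hf1 z hz, hf2 z hz⟩
  -- injectivity
  have hinj : ∀ z1 (h1 : z1 ∈ Nbr Adj C y), ∀ z2 (h2 : z2 ∈ Nbr Adj C y),
      f z1 h1 = f z2 h2 → z1 = z2 := by
    intro z1 h1 z2 h2 heq
    by_contra hne12
    have h1' := h1; have h2' := h2
    obtain ⟨h1H, h1y, -⟩ := h1'
    obtain ⟨h2H, h2y, -⟩ := h2'
    rcases hf6 z1 h1 with e1 | e1 <;> rcases hf6 z2 h2 with e2 | e2
    · -- both tails are the sources: sources equal hence regions equal
      have hseq : g z1 h1 = g z2 h2 := by rw [← e1, ← e2, heq]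
      have hz2in : z2 ∈ Reach Adj C (g z1 h1) := by rw [hseq]; exact hf5 z2 h2
      have htriple := (region_two_hubs hacyc W (hf3 z1 h1) (hf4 z1 h1) (hf5 z1 h1)
        hy h1H (Ne.symm h1y)).2.2
      rcases htriple z2 hz2in with e | e | e
      · exact (hub_ne_source h2H (hf3 z1 h1)) e
      · exact h2y e
      · exact hne12 e.symm
    · -- u = s1 = z2 : source equals hub, impossible
      exact (hub_ne_source h2H (hf3 z1 h1)) (by rw [← e2, ← heq]; exact e1)
    · exact (hub_ne_source h1H (hf3 z2 h2)) (by rw [← e1, heq]; exact e2)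
    · exact hne12 (by rw [← e1, ← e2]; exact heq)
  -- conclude via an injection into the in-neighbour set of y
  have : (Nbr Adj C y).ncard ≤ {u | u ∈ C ∧ Adj u y}.ncard := by
    apply Set.ncard_le_ncard_of_injOn (fun z => if hz : z ∈ Nbr Adj C y then f z hz else z)
    · intro a ha; simp only [dif_pos ha]; exact hmap a ha
    · intro a ha b hb hab
      simp only [dif_pos ha, dif_pos hb] at hab
      exact hinj a ha b hb hab
  unfold Indeg at hindeg
  omega

end NbrSec

section Heredity
set_option linter.unusedSectionVars false
set_option linter.unusedVariables false

open Relation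

variable {V : Type*} [Fintype V] {Adj : V → V → Prop} {C : Set V}

variable (hacyc : Acyclic Adj) (W : World Adj C)

/-- Data about a residual component. -/
lemma residual_component (hacyc : Acyclic Adj) (W : World Adj C) {s₀ x : V}
    (hs₀ : IsSource Adj C s₀) (hx : x ∈ C \ Reach Adj C s₀) :
    let K := Comp Adj (C \ Reach Adj C s₀) x
    World Adj K ∧ K ⊆ C \ Reach Adj C s₀ ∧
    (∀ t, IsSource Adj K t → IsSource Adj C t ∧ Reach Adj K t ⊆ Reach Adj C t) ∧
    Hb Adj K ⊆ (Hb Adj C ∩ K) := by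
  classical
  intro K
  set Wr := C \ Reach Adj C s₀ with hWr
  have hKW : K ⊆ Wr := comp_subset hx
  have hWC : Wr ⊆ C := Set.diff_subset
  have hKC : K ⊆ C := hKW.trans hWC
  have hcompK : ∀ z ∈ K, Comp Adj K z = K := by
    intro z hz
    have h1 : Comp Adj (Comp Adj Wr x) z = Comp Adj Wr z := comp_idem hx hz
    have h2 : Comp Adj Wr z = Comp Adj Wr x := comp_eq_of_mem hz
    simpa [K, h2] using h1
  have hsource : ∀ t, IsSource Adj K t → IsSource Adj C t := by
    intro t ht
    refine ⟨hKC ht.1, ?_⟩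
    intro u huC hadj
    by_cases hu : u ∈ Reach Adj C s₀
    · have : t ∈ Reach Adj C s₀ := reach_closed hu (hKC ht.1) hadj huC
      exact (hKW ht.1).2 this
    · -- u ∈ Wr; then u is symAdj-adjacent to t within Wr, hence in K
      have huW : u ∈ Wr := ⟨huC, hu⟩
      have htW : t ∈ Wr := hKW ht.1
      have : u ∈ Comp Adj Wr t := ReflTransGen.single (Or.inr ⟨huW, htW, hadj⟩)
      rw [comp_eq_of_mem ht.1] at this
      exact ht.2 u this hadj
  have hreach : ∀ t, IsSource Adj K t → Reach Adj K t ⊆ Reach Adj C t :=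
    fun t _ => reach_mono hKC t
  refine ⟨⟨hcompK, ?_⟩, hKW, fun t ht => ⟨hsource t ht, hreach t ht⟩, ?_⟩
  · -- AS transfers
    intro t ht
    have h1 : IncE Adj K (Reach Adj K t) ⊆ IncE Adj C (Reach Adj C t) := by
      rintro p ⟨h1, h2, h3⟩
      exact ⟨hKC h1, hreach t ht h2, h3⟩
    calc (IncE Adj K (Reach Adj K t)).ncard
        ≤ (IncE Adj C (Reach Adj C t)).ncard := Set.ncard_le_ncard h1 (Set.toFinite _)
      _ ≤ 4 := W.as t (hsource t ht)
  · -- hubs transfer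
    rintro z ⟨hzK, hz2⟩
    have hsub : {u | u ∈ K ∧ Adj u z} ⊆ {u | u ∈ C ∧ Adj u z} :=
      fun u hu => ⟨hKC hu.1, hu.2⟩
    have : Indeg Adj K z ≤ Indeg Adj C z := Set.ncard_le_ncard hsub (Set.toFinite _)
    exact ⟨⟨hKC hzK, by omega⟩, hzK⟩

end Heredity
section StructSec
set_option linter.unusedSectionVars false
set_option linter.unusedVariables false

open Relation

variable {V : Type*} [Fintype V] {Adj : V → V → Prop} {C : Set V}

lemma nbr_subset_hb {y : V} : Nbr Adj C y ⊆ Hb Adj C := fun _ hz => hz.1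

lemma nbr_symm {y z : V} (hy : y ∈ Hb Adj C) (hz : z ∈ Nbr Adj C y) :
    y ∈ Nbr Adj C z := by
  obtain ⟨hzH, hzy, s, hs, hys, hzs⟩ := hz
  exact ⟨hy, fun e => hzy e.symm, s, hs, hzs, hys⟩

lemma subset_singleton_of_ncard_le_one {S : Set V} {a : V} (ha : a ∈ S)
    (h : S.ncard ≤ 1) : S ⊆ {a} := by
  intro z hz
  by_contra hza
  have : 1 < S.ncard := by
    rw [Set.one_lt_ncard_iff (Set.toFinite _)]
    exact ⟨z, a, hz, ha, hza⟩
  omega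

lemma exists_mem_notin_pair {S : Set V} {a b : V} (h : 3 ≤ S.ncard) :
    ∃ w ∈ S, w ≠ a ∧ w ≠ b := by
  by_contra hcon
  push_neg at hcon
  have hsub : S ⊆ insert a {b} := by
    intro w hw
    rcases eq_or_ne w a with rfl | hwa
    · exact Set.mem_insert _ _
    rcases eq_or_ne w b with rfl | hwb
    · exact Set.mem_insert_of_mem _ rfl
    · exact absurd hwb (by simpa [hwa] using hcon w hw)
  have := Set.ncard_le_ncard hsub (Set.toFinite _)
  have h2 : (insert a ({b} : Set V)).ncard ≤ 2 := by
    have := Set.ncard_insert_le a ({b} : Set V)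
    simpa using this
  omega

lemma nonempty_of_ncard_pos {S : Set V} (h : 1 ≤ S.ncard) : S.Nonempty := by
  rcases Set.eq_empty_or_nonempty S with rfl | hne
  · simp at h
  · exact hne

variable (hacyc : Acyclic Adj) (W : World Adj C)
include hacyc W

/-- No hubs: the whole connected world is one region. -/
lemma no_hub_full_reach (hHb : Hb Adj C = ∅) (hne : C.Nonempty) :
    ∃ s, IsSource Adj C s ∧ C ⊆ Reach Adj C s := by
  obtain ⟨x0, hx0⟩ := hne
  obtain ⟨r0, hr0, hx0r⟩ := exists_source_reach hacyc x0 hx0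
  refine ⟨r0, hr0, ?_⟩
  have key : ∀ x, Relation.ReflTransGen (symAdj Adj C) r0 x → x ∈ Reach Adj C r0 := by
    intro x hx
    induction hx with
    | refl => exact reach_self C r0
    | @tail b c hb hbc ih =>
      have hbc' : ∃ u v, (u = b ∧ v = c ∨ u = c ∧ v = b) ∧ u ∈ C ∧ v ∈ C ∧ Adj u v := by
        rcases hbc with h | h
        · exact ⟨b, c, Or.inl ⟨rfl, rfl⟩, h.1, h.2.1, h.2.2⟩
        · exact ⟨c, b, Or.inr ⟨rfl, rfl⟩, h.1, h.2.1, h.2.2⟩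
      obtain ⟨u, v, hcase, huC, hvC, hadj⟩ := hbc'
      obtain ⟨t, ht, hut⟩ := exists_source_reach hacyc u huC
      have hvt : v ∈ Reach Adj C t := reach_closed hut hvC hadj huC
      have hbt : b ∈ Reach Adj C t := by rcases hcase with ⟨rfl, rfl⟩ | ⟨rfl, rfl⟩ <;> assumption
      have hct : c ∈ Reach Adj C t := by rcases hcase with ⟨rfl, rfl⟩ | ⟨rfl, rfl⟩ <;> assumption
      by_cases hts : t = r0
      · subst hts; exact hct
      · obtain ⟨h, -, -, hhH⟩ := overlap_hub hacyc hr0 ht (Ne.symm hts) ih hbt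
        rw [hHb] at hhH
        exact absurd hhH (Set.notMem_empty _)
  intro x hx
  have : x ∈ Comp Adj C r0 := by rw [W.comp r0 hr0.1]; exact hx
  exact key x this

/-- No hubs implies dtdLE 1. -/
lemma no_hub_dtdLE_one (hHb : Hb Adj C = ∅) : dtdLE Adj C 1 := by
  rcases Set.eq_empty_or_nonempty C with rfl | hne
  · exact dtdLE.empty 1
  obtain ⟨s, hs, hfull⟩ := no_hub_full_reach hacyc W hHb hne
  exact dtdLE_one_of_full_reach hs hfull W.comp

/-- Convenience: build a dtdLE step for a world by removing one source. -/
lemma world_step {s : V} {n : ℕ} (hs : IsSource Adj C s)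
    (hres : dtdLE Adj (C \ Reach Adj C s) n) : dtdLE Adj C (n + 1) := by
  refine dtdLE.step C n (fun _ => s) ?_ ?_
  · intro v hv; rw [W.comp v hv]; exact hs
  · intro v hv; rw [W.comp v hv]; exact hres

/-- Process residual: all components of the residual satisfy dtdLE n → residual does. -/
lemma residual_combine {s : V} {n : ℕ} (hs : IsSource Adj C s)
    (h : ∀ x (hx : x ∈ C \ Reach Adj C s),
      dtdLE Adj (Comp Adj (C \ Reach Adj C s) x) n) :
    dtdLE Adj (C \ Reach Adj C s) n :=
  dtdLE_combine h

/-- A hub whose neighbourhood is empty: the whole world dies in 2 levels. -/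
lemma hub_star_dtdLE_two {y : V} (hy : y ∈ Hb Adj C) (hnbr : Nbr Adj C y = ∅) :
    dtdLE Adj C 2 := by
  classical
  obtain ⟨s₀, hs₀, hys₀⟩ := exists_source_reach hacyc y hy.1
  have hP : ∀ s, IsSource Adj C s → ∀ h, h ∈ Hb Adj C → h ∈ Reach Adj C s →
      (Reach Adj C s ∩ ({y} : Set V)).Nonempty → h ∈ ({y} : Set V) := by
    rintro s hs h hhH hhs ⟨p, hpR, hpy⟩
    obtain rfl : y = p := (Set.mem_singleton_iff.mp hpy).symm
    rcases eq_or_ne h y with rfl | hne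
    · rfl
    · have hmem : h ∈ Nbr Adj C y := ⟨hhH, hne, s, hs, hpR, hhs⟩
      rw [hnbr] at hmem
      exact absurd hmem (Set.notMem_empty _)
  have hall := conf_all hacyc W hP ⟨s₀, hs₀, ⟨y, hys₀, rfl⟩⟩
  apply world_step hacyc W hs₀
  apply residual_combine hacyc W hs₀
  intro x hx
  -- the component of x in the residual has no hubs
  obtain ⟨WK, hKsub, hKsrc, hKhb⟩ := residual_component hacyc W hs₀ hx
  set K := Comp Adj (C \ Reach Adj C s₀) x with hK
  have hKHb : Hb Adj K = ∅ := by
    by_contra hcon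
    rw [← Set.not_nonempty_iff_eq_empty] at hcon
    push_neg at hcon
    obtain ⟨z, hz⟩ := hcon
    have hzC : z ∈ Hb Adj C := (hKhb hz).1
    have hzK : z ∈ K := (hKhb hz).2
    obtain ⟨sz, hsz, hzs, ⟨p, hpR, hpy⟩⟩ := hall z hzC.1
    obtain rfl : y = p := (Set.mem_singleton_iff.mp hpy).symm
    have hzy : z ≠ y := by
      intro e
      exact (hKsub hzK).2 (e ▸ hys₀)
    have hmem : z ∈ Nbr Adj C y := ⟨hzC, hzy, sz, hsz, hpR, hzs⟩
    rw [hnbr] at hmem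
    exact absurd hmem (Set.notMem_empty _)
  exact no_hub_dtdLE_one hacyc WK hKHb

/-- Hubs of all are reachable from each other in the hub-neighbour graph. -/
lemma hub_connected {a b : V} (ha : a ∈ Hb Adj C) (hb : b ∈ Hb Adj C) :
    Relation.ReflTransGen (fun p q => q ∈ Nbr Adj C p) a b := by
  classical
  set P : Set V := {w | Relation.ReflTransGen (fun p q => q ∈ Nbr Adj C p) a w} with hPdef
  have hPhub : ∀ w ∈ P, w ∈ Hb Adj C := by
    intro w hw
    induction hw with
    | refl => exact ha
    | tail _ h ih => exact nbr_subset_hb h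
  have hP : ∀ s, IsSource Adj C s → ∀ h, h ∈ Hb Adj C → h ∈ Reach Adj C s →
      (Reach Adj C s ∩ P).Nonempty → h ∈ P := by
    rintro s hs h hhH hhs ⟨p, hpR, hpP⟩
    rcases eq_or_ne h p with rfl | hne
    · exact hpP
    · exact ReflTransGen.tail hpP ⟨hhH, hne, s, hs, hpR, hhs⟩
  obtain ⟨sa, hsa, has⟩ := exists_source_reach hacyc a ha.1
  have hall := conf_all hacyc W hP ⟨sa, hsa, ⟨a, has, ReflTransGen.refl⟩⟩
  obtain ⟨sb, hsb, hbs, ⟨p, hpR, hpP⟩⟩ := hall b hb.1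
  rcases eq_or_ne b p with rfl | hne
  · exact hpP
  · exact ReflTransGen.tail hpP ⟨hb, hne, sb, hsb, hpR, hbs⟩

end StructSec
section MainSec
set_option linter.unusedSectionVars false
set_option linter.unusedVariables false
set_option maxHeartbeats 1000000

open Relation

variable {V : Type*} [Fintype V] {Adj : V → V → Prop} {C : Set V}

lemma three_distinct_ncard {S : Set V} {a b c : V} (ha : a ∈ S) (hb : b ∈ S) (hc : c ∈ S)
    (hab : a ≠ b) (hac : a ≠ c) (hbc : b ≠ c) : 3 ≤ S.ncard := by
  have hsub : ({a, b, c} : Set V) ⊆ S := by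
    intro w hw
    rcases hw with rfl | rfl | rfl
    · exact ha
    · exact hb
    · exact hc
  have h3 : ({a, b, c} : Set V).ncard = 3 := by
    rw [Set.ncard_insert_of_notMem (by simp [hab, hac]) (Set.toFinite _),
      Set.ncard_insert_of_notMem (by simp [hbc]) (Set.toFinite _), Set.ncard_singleton]
  calc 3 = ({a, b, c} : Set V).ncard := h3.symm
    _ ≤ S.ncard := Set.ncard_le_ncard hsub (Set.toFinite _)

variable (hacyc : Acyclic Adj) (W : World Adj C)
include hacyc W

lemma world_peel {s₀ : V} (hs₀ : IsSource Adj C s₀) {n : ℕ}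
    (h : ∀ x, x ∈ C \ Reach Adj C s₀ →
      dtdLE Adj (Comp Adj (C \ Reach Adj C s₀) x) n) :
    dtdLE Adj C (n + 1) :=
  world_step hacyc W hs₀ (residual_combine hacyc W hs₀ h)

/-- In a residual component containing `y0`, whose only possible neighbour `y1`
was destroyed, all hubs are `y0`. -/
lemma residual_hub_unique {s₀ y0 y1 : V}
    (hs₀ : IsSource Adj C s₀) (hy0 : y0 ∈ Hb Adj C)
    (hnbr : Nbr Adj C y0 ⊆ {y1}) (hy1dead : y1 ∈ Reach Adj C s₀)
    {x : V} (hx : x ∈ C \ Reach Adj C s₀)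
    (hy0K : y0 ∈ Comp Adj (C \ Reach Adj C s₀) x) :
    Hb Adj (Comp Adj (C \ Reach Adj C s₀) x) ⊆ {y0} := by
  classical
  obtain ⟨WK, hKsub, hKsrc, hKhb⟩ := residual_component hacyc W hs₀ hx
  set K := Comp Adj (C \ Reach Adj C s₀) x with hKdef
  intro z hz
  have hP : ∀ t, IsSource Adj K t → ∀ h, h ∈ Hb Adj K → h ∈ Reach Adj K t →
      (Reach Adj K t ∩ ({y0} : Set V)).Nonempty → h ∈ ({y0} : Set V) := by
    rintro t ht h hhH hht ⟨p, hpR, hpy⟩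
    obtain rfl : y0 = p := (Set.mem_singleton_iff.mp hpy).symm
    rcases eq_or_ne h y0 with rfl | hne
    · rfl
    · have hmem : h ∈ Nbr Adj C y0 :=
        ⟨(hKhb hhH).1, hne, t, (hKsrc t ht).1, (hKsrc t ht).2 hpR, (hKsrc t ht).2 hht⟩
      have : h = y1 := hnbr hmem
      subst this
      exact absurd hy1dead ((hKsub (hKhb hhH).2).2)
  obtain ⟨t0, ht0, hy0t0⟩ := exists_source_reach hacyc y0 hy0K
  have hwalk : Relation.ReflTransGen (symAdj Adj K) y0 z := by
    have : z ∈ Comp Adj K y0 := by rw [WK.comp y0 hy0K]; exact (hKhb hz).2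
    exact this
  obtain ⟨t, ht, hzt, hmeets⟩ := conf_lemma hacyc WK hP
    ⟨t0, ht0, hy0t0, ⟨y0, hy0t0, rfl⟩⟩ hwalk
  exact hP t ht z hz hzt hmeets

/-- The main structural recursion. -/
lemma comp_main :
    ∀ N : ℕ, ∀ C : Set V, C.ncard ≤ N → World Adj C →
      dtdLE Adj C (2 * (Hb Adj C).ncard / 5 + 3) ∧
      (¬ (3 ≤ (Hb Adj C).ncard ∧ ∀ y ∈ Hb Adj C, (Nbr Adj C y).ncard = 2) →
        dtdLE Adj C ((2 * (Hb Adj C).ncard + 4) / 5 + 2)) := by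
  intro N
  induction N with
  | zero =>
    intro C hcard W
    have hC : C = ∅ := by
      have := Set.ncard_eq_zero (Set.toFinite C)
      have hz : C.ncard = 0 := by omega
      exact this.mp hz
    subst hC
    exact ⟨dtdLE.empty _, fun _ => dtdLE.empty _⟩
  | succ N ih =>
    intro C hcard W
    set m := (Hb Adj C).ncard with hm
    -- residual size helper
    have hresN : ∀ s₀ : V, IsSource Adj C s₀ → ∀ x, x ∈ C \ Reach Adj C s₀ →
        (Comp Adj (C \ Reach Adj C s₀) x).ncard ≤ N := by
      intro s₀ hs₀ x hx
      have hsub : Comp Adj (C \ Reach Adj C s₀) x ⊆ C :=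
        (comp_subset hx).trans Set.diff_subset
      have hs₀C : s₀ ∈ C := hs₀.1
      have hs₀not : s₀ ∉ Comp Adj (C \ Reach Adj C s₀) x := by
        intro hmem
        exact (comp_subset hx hmem).2 (reach_self C s₀)
      have hss : Comp Adj (C \ Reach Adj C s₀) x ⊂ C :=
        ⟨hsub, fun hCs => hs₀not (hCs hs₀C)⟩
      have := Set.ncard_lt_ncard hss (Set.toFinite C)
      omega
    by_cases h0 : Hb Adj C = ∅
    · -- no hubs at all
      have h1 := no_hub_dtdLE_one hacyc W h0
      exact ⟨dtdLE_mono h1 (by omega), fun _ => dtdLE_mono h1 (by omega)⟩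
    by_cases h1 : ∃ y ∈ Hb Adj C, Nbr Adj C y = ∅
    · obtain ⟨y, hy, hny⟩ := h1
      have h2 := hub_star_dtdLE_two hacyc W hy hny
      exact ⟨dtdLE_mono h2 (by omega), fun _ => dtdLE_mono h2 (by omega)⟩
    push_neg at h1
    by_cases h2 : ∃ y0 ∈ Hb Adj C, (Nbr Adj C y0).ncard ≤ 1
    · -- CASE 3 : a hub with a single neighbour
      obtain ⟨y0, hy0, hny0⟩ := h2
      obtain ⟨y1, hy1n⟩ := h1 y0 hy0
      have hy1H : y1 ∈ Hb Adj C := nbr_subset_hb hy1n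
      have hsub1 : Nbr Adj C y0 ⊆ {y1} := subset_singleton_of_ncard_le_one hy1n hny0
      have hy10 : y1 ≠ y0 := hy1n.2.1
      by_cases hm3 : 3 ≤ m
      · -- StepLemma case: find a second link away from y0
        have hy2ex : ∃ y2 ∈ Nbr Adj C y1, y2 ≠ y0 := by
          by_contra hcon
          push_neg at hcon
          have hsub2 : Nbr Adj C y1 ⊆ {y0} := fun z hz => hcon z hz
          -- confinement with P = {y0, y1} traps all hubs
          have hP : ∀ s, IsSource Adj C s → ∀ h, h ∈ Hb Adj C → h ∈ Reach Adj C s →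
              (Reach Adj C s ∩ ({y0, y1} : Set V)).Nonempty →
                h ∈ ({y0, y1} : Set V) := by
            rintro s hs h hhH hhs ⟨p, hpR, hpP⟩
            rcases eq_or_ne h p with rfl | hne
            · exact hpP
            rcases hpP with rfl | rfl
            · exact Or.inr (hsub1 ⟨hhH, hne, s, hs, hpR, hhs⟩)
            · exact Or.inl (hsub2 ⟨hhH, hne, s, hs, hpR, hhs⟩)
          obtain ⟨s0, hs0, hy0s0⟩ := exists_source_reach hacyc y0 hy0.1
          obtain ⟨w, hwH, hwy0, hwy1⟩ := exists_mem_notin_pair (a := y0) (b := y1) hm3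
          obtain ⟨sw, hsw, hwsw, hmeets⟩ :=
            conf_all hacyc W hP ⟨s0, hs0, ⟨y0, hy0s0, Or.inl rfl⟩⟩ w hwH.1
          rcases hP sw hsw w hwH hwsw hmeets with e | e
          · exact hwy0 e
          · exact hwy1 e
        obtain ⟨y2, hy2n, hy20⟩ := hy2ex
        have hy2H : y2 ∈ Hb Adj C := nbr_subset_hb hy2n
        have hy21 : y2 ≠ y1 := hy2n.2.1
        obtain ⟨-, -, s₀, hs₀, hy1s, hy2s⟩ := hy2n
        -- y0 is not destroyed
        have htriple := (region_two_hubs hacyc W hs₀ hy1s hy2s hy1H hy2H hy21.symm).2.2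
        have hy0alive : y0 ∉ Reach Adj C s₀ := by
          intro hmem
          rcases htriple y0 hmem with e | e | e
          · exact (hub_ne_source hy0 hs₀) e
          · exact hy10 e.symm
          · exact hy20 e.symm
        -- process the residual
        have hKbound : ∀ x, x ∈ C \ Reach Adj C s₀ →
            dtdLE Adj (Comp Adj (C \ Reach Adj C s₀) x) (2 * max 1 (m - 3) / 5 + 3) := by
          intro x hx
          obtain ⟨WK, hKsub, hKsrc, hKhb⟩ := residual_component hacyc W hs₀ hx
          set K := Comp Adj (C \ Reach Adj C s₀) x with hKdef
          have hKcard : (Hb Adj K).ncard ≤ max 1 (m - 3) := by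
            by_cases hy0K : y0 ∈ K
            · have := residual_hub_unique hacyc W hs₀ hy0 hsub1 hy1s hx hy0K
              have h1' : (Hb Adj K).ncard ≤ 1 := by
                have := Set.ncard_le_ncard this (Set.toFinite _)
                simpa using this
              omega
            · have hsub3 : Hb Adj K ⊆ Hb Adj C \ {y0, y1, y2} := by
                intro z hz
                refine ⟨(hKhb hz).1, ?_⟩
                intro hzmem
                have hzK : z ∈ K := (hKhb hz).2
                rcases hzmem with rfl | rfl | rfl
                · exact hy0K hzK
                · exact (hKsub hzK).2 hy1s
                · exact (hKsub hzK).2 hy2s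
              have hppp : ({y0, y1, y2} : Set V) ⊆ Hb Adj C := by
                intro w hw
                rcases hw with rfl | rfl | rfl
                · exact hy0
                · exact hy1H
                · exact hy2H
              have hc3 : ({y0, y1, y2} : Set V).ncard = 3 := by
                rw [Set.ncard_insert_of_notMem (by simp [hy10.symm, hy20.symm]) (Set.toFinite _),
                  Set.ncard_insert_of_notMem (by simp [hy21.symm]) (Set.toFinite _),
                  Set.ncard_singleton]
              have hdiff := Set.ncard_diff hppp (Set.toFinite _)
              have := Set.ncard_le_ncard hsub3 (Set.toFinite _)
              rw [hdiff, hc3] at this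
              omega
          have hres := (ih K (hresN s₀ hs₀ x hx) WK).1
          refine dtdLE_mono hres ?_
          have h5 : 2 * (Hb Adj K).ncard / 5 ≤ 2 * max 1 (m - 3) / 5 :=
            Nat.div_le_div_right (by omega)
          omega
        have hfinal := world_peel hacyc W hs₀ hKbound
        constructor
        · refine dtdLE_mono hfinal ?_
          have : 2 * max 1 (m - 3) / 5 + 3 + 1 ≤ 2 * m / 5 + 3 := by
            rcases Nat.le_total m 4 with h | h
            · have : max 1 (m - 3) = 1 := by omega
              rw [this]; omega
            · have : max 1 (m - 3) = m - 3 := by omega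
              rw [this]
              have : (2 * (m - 3)) + 6 = 2 * m := by omega
              omega
          omega
        · intro _
          refine dtdLE_mono hfinal ?_
          rcases Nat.le_total m 4 with h | h
          · have he : max 1 (m - 3) = 1 := by omega
            rw [he]
            have : (2 * m + 4) / 5 ≥ 2 := by
              have : 10 ≤ 2 * m + 4 := by omega
              omega
            omega
          · have he : max 1 (m - 3) = m - 3 := by omega
            rw [he]
            have h10 : 2 * (m - 3) + 10 = 2 * m + 4 := by omega
            have := Nat.add_div_right (2 * (m - 3)) (show 0 < 5 by omega)
            omega
      · -- m ≤ 2 : remove the link (y0, y1); the residual is hub-free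
        obtain ⟨-, -, s₀, hs₀, hy0s, hy1s⟩ := hy1n
        have hHbpair : Hb Adj C ⊆ {y0, y1} := by
          intro z hz
          by_contra hcon
          have hz0 : z ≠ y0 := fun e => hcon (by simp [e])
          have hz1 : z ≠ y1 := fun e => hcon (by simp [e])
          have := three_distinct_ncard hz hy0 hy1H hz0 hz1 hy10.symm
          omega
        have hKbound : ∀ x, x ∈ C \ Reach Adj C s₀ →
            dtdLE Adj (Comp Adj (C \ Reach Adj C s₀) x) 1 := by
          intro x hx
          obtain ⟨WK, hKsub, hKsrc, hKhb⟩ := residual_component hacyc W hs₀ hx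
          set K := Comp Adj (C \ Reach Adj C s₀) x with hKdef
          have hKHb : Hb Adj K = ∅ := by
            rw [Set.eq_empty_iff_forall_notMem]
            intro z hz
            have hzC := (hKhb hz).1
            have hzK := (hKhb hz).2
            rcases hHbpair hzC with rfl | rfl
            · exact (hKsub hzK).2 hy0s
            · exact (hKsub hzK).2 hy1s
          exact no_hub_dtdLE_one hacyc WK hKHb
        have hfinal := world_peel hacyc W hs₀ hKbound
        exact ⟨dtdLE_mono hfinal (by omega), fun _ => dtdLE_mono hfinal (by omega)⟩
    · -- CASE 4 : 2-regular hub graph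
      push_neg at h2
      have hreg : ∀ y ∈ Hb Adj C, (Nbr Adj C y).ncard = 2 := by
        intro y hy
        have := nbr_card_le_two hacyc W hy
        have := h2 y hy
        omega
      obtain ⟨y1, hy1⟩ := Set.nonempty_iff_ne_empty.mpr h0
      have hm3 : 3 ≤ m := by
        have h2' : 1 < (Nbr Adj C y1).ncard := by rw [hreg y1 hy1]; omega
        obtain ⟨z1, z2, hz1, hz2, hz12⟩ := (Set.one_lt_ncard_iff (Set.toFinite _)).mp h2'
        exact three_distinct_ncard hy1 (nbr_subset_hb hz1) (nbr_subset_hb hz2)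
          hz1.2.1.symm hz2.2.1.symm hz12
      have hNR : (3 ≤ m ∧ ∀ y ∈ Hb Adj C, (Nbr Adj C y).ncard = 2) := ⟨hm3, hreg⟩
      -- pick any link and remove it
      obtain ⟨y2, hy2n⟩ := nonempty_of_ncard_pos (S := Nbr Adj C y1) (by rw [hreg y1 hy1]; omega)
      have hy2H : y2 ∈ Hb Adj C := nbr_subset_hb hy2n
      have hy21 : y2 ≠ y1 := hy2n.2.1
      obtain ⟨-, -, s₀, hs₀, hy1s, hy2s⟩ := hy2n
      have hKbound : ∀ x, x ∈ C \ Reach Adj C s₀ →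
          dtdLE Adj (Comp Adj (C \ Reach Adj C s₀) x) ((2 * (m - 2) + 4) / 5 + 2) := by
        intro x hx
        obtain ⟨WK, hKsub, hKsrc, hKhb⟩ := residual_component hacyc W hs₀ hx
        set K := Comp Adj (C \ Reach Adj C s₀) x with hKdef
        have hKcard : (Hb Adj K).ncard ≤ m - 2 := by
          have hsub3 : Hb Adj K ⊆ Hb Adj C \ {y1, y2} := by
            intro z hz
            refine ⟨(hKhb hz).1, ?_⟩
            intro hzmem
            have hzK : z ∈ K := (hKhb hz).2
            rcases hzmem with rfl | rfl
            · exact (hKsub hzK).2 hy1s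
            · exact (hKsub hzK).2 hy2s
          have hpp : ({y1, y2} : Set V) ⊆ Hb Adj C := by
            intro w hw
            rcases hw with rfl | rfl
            · exact hy1
            · exact hy2H
          have hc2 : ({y1, y2} : Set V).ncard = 2 := by
            rw [Set.ncard_insert_of_notMem (by simp [hy21.symm]) (Set.toFinite _),
              Set.ncard_singleton]
          have hdiff := Set.ncard_diff hpp (Set.toFinite _)
          have := Set.ncard_le_ncard hsub3 (Set.toFinite _)
          rw [hdiff, hc2] at this
          omega
        -- K cannot itself be 2-regular
        have hKNR : ¬ (3 ≤ (Hb Adj K).ncard ∧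
            ∀ z ∈ Hb Adj K, (Nbr Adj K z).ncard = 2) := by
          rintro ⟨hK3, hKreg⟩
          have hnbrsub : ∀ z, Nbr Adj K z ⊆ Nbr Adj C z := by
            rintro z z' ⟨hz'H, hne, t, ht, hzR, hz'R⟩
            exact ⟨(hKhb hz'H).1, hne, t, (hKsrc t ht).1,
              (hKsrc t ht).2 hzR, (hKsrc t ht).2 hz'R⟩
          have hnbreq : ∀ z ∈ Hb Adj K, Nbr Adj K z = Nbr Adj C z := by
            intro z hz
            refine Set.eq_of_subset_of_ncard_le (hnbrsub z) ?_ (Set.toFinite _)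
            rw [hKreg z hz]
            exact nbr_card_le_two hacyc W (hKhb hz).1
          obtain ⟨z0, hz0⟩ := nonempty_of_ncard_pos (S := Hb Adj K) (by omega)
          have hwalk := hub_connected hacyc W (hKhb hz0).1 hy1
          have hclosed : ∀ b, Relation.ReflTransGen (fun p q => q ∈ Nbr Adj C p) z0 b →
              b ∈ Hb Adj K := by
            intro b hb
            induction hb with
            | refl => exact hz0
            | @tail b c hbb hbc ihb =>
              have : c ∈ Nbr Adj K b := by rw [hnbreq b ihb]; exact hbc
              exact nbr_subset_hb this
          have hy1K : y1 ∈ Hb Adj K := hclosed y1 hwalk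
          exact (hKsub (hKhb hy1K).2).2 hy1s
        have hres := (ih K (hresN s₀ hs₀ x hx) WK).2 hKNR
        refine dtdLE_mono hres ?_
        have h5 : (2 * (Hb Adj K).ncard + 4) / 5 ≤ (2 * (m - 2) + 4) / 5 :=
          Nat.div_le_div_right (by omega)
        omega
      have hfinal := world_peel hacyc W hs₀ hKbound
      constructor
      · refine dtdLE_mono hfinal ?_
        have he2 : 2 * (m - 2) + 4 = 2 * m := by omega
        rw [he2]
      · intro hNR'
        exact absurd hNR hNR'

end MainSec
section MasterSec
set_option linter.unusedSectionVars false
set_option linter.unusedVariables false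

open Relation

variable {V : Type*} [Fintype V] {Adj : V → V → Prop}

lemma master (hacyc : Acyclic Adj) :
    ∀ N : ℕ, ∀ A : Set V, A.ncard ≤ N → dtdLE Adj A ((Edges Adj A).ncard / 5 + 3) := by
  intro N
  induction N with
  | zero =>
    intro A hcard
    have hA : A = ∅ := (Set.ncard_eq_zero (Set.toFinite A)).mp (by omega)
    subst hA
    exact dtdLE.empty _
  | succ N ih =>
    intro A hcard
    apply dtdLE_combine
    intro v hv
    set C := Comp Adj A v with hCdef
    have hCsub : C ⊆ A := comp_subset hv
    have hCcomp : ∀ x ∈ C, Comp Adj C x = C := by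
      intro x hx
      rw [comp_idem hv hx, comp_eq_of_mem hx]
    -- a generic way to conclude through one peeling step
    have hstep : ∀ s : V, IsSource Adj C s → ∀ n : ℕ,
        dtdLE Adj (C \ Reach Adj C s) n → dtdLE Adj C (n + 1) := by
      intro s hs n hres
      refine dtdLE.step C n (fun _ => s) ?_ ?_
      · intro u hu; rw [hCcomp u hu]; exact hs
      · intro u hu; rw [hCcomp u hu]; exact hres
    by_cases hbig : ∃ s, IsSource Adj C s ∧
        (Edges Adj (C \ Reach Adj C s)).ncard + 5 ≤ (Edges Adj A).ncard
    · obtain ⟨s, hs, hE⟩ := hbig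
      have hsC : s ∈ C := hs.1
      have hWsub : C \ Reach Adj C s ⊂ A := by
        constructor
        · exact Set.diff_subset.trans hCsub
        · intro hAs
          have : s ∈ C \ Reach Adj C s := hAs (hCsub hsC)
          exact this.2 (reach_self C s)
      have hWcard : (C \ Reach Adj C s).ncard ≤ N := by
        have := Set.ncard_lt_ncard hWsub (Set.toFinite A)
        omega
      have hres := ih (C \ Reach Adj C s) hWcard
      have hres' : dtdLE Adj (C \ Reach Adj C s) ((Edges Adj A).ncard / 5 + 2) := by
        refine dtdLE_mono hres ?_
        set a := (Edges Adj (C \ Reach Adj C s)).ncard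
        set b := (Edges Adj A).ncard
        omega
      have := hstep s hs _ hres'
      exact dtdLE_mono this (by omega)
    · push_neg at hbig
      have W : World Adj C := by
        refine ⟨hCcomp, ?_⟩
        intro s hs
        have hsplit := edges_split (Adj := Adj) (C := C) (s := s) hs.1
        have h1 := hbig s hs
        have h2 : (Edges Adj C).ncard ≤ (Edges Adj A).ncard := edges_mono hCsub
        have h3 : IncE Adj C (Reach Adj C s) = IncE Adj C (Reach Adj C s) := rfl
        omega
      have hmain := (comp_main hacyc W C.ncard C le_rfl W).1
      refine dtdLE_mono hmain ?_
      have h2m := two_mul_hb_le_edges (Adj := Adj) C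
      have h2 : (Edges Adj C).ncard ≤ (Edges Adj A).ncard := edges_mono hCsub
      have : 2 * (Hb Adj C).ncard / 5 ≤ (Edges Adj A).ncard / 5 :=
        Nat.div_le_div_right (by omega)
      omega

end MasterSec

/-- a DAG with `ℓ` edges has dtd ≤ ⌊ℓ/5⌋ + 3. -/
theorem dtd_le_edges_div_five {V : Type*} [Fintype V] (Adj : V → V → Prop)
    (hacyc : Acyclic Adj) :
    dtd Adj ≤ {p : V × V | Adj p.1 p.2}.ncard / 5 + 3 := by
  have hEq : Edges Adj (Set.univ : Set V) = {p : V × V | Adj p.1 p.2} := by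
    ext p; simp [Edges]
  have h := master hacyc (Set.univ : Set V).ncard Set.univ le_rfl
  rw [hEq] at h
  exact Nat.sInf_le h

end DagPaper
end

section
/- Let H be an undirected graph that is a minor obstruction for treedepth k−1 (i.e., td(H) = k but every proper minor of H has treedepth at most k−1), and let H_sub be obtained by subdividing every edge of H exactly once. Orient H_sub so that the original vertices of H are sources and every subdivision vertex has indegree 2. Then the DAG treedepth of this orientation of H_sub equals k. -/
open Set

namespace DagPaper

variable {V : Type*}

/-! ### Auxiliary development for Statement 8 -/

section Subdivision

variable {V : Type} (G : SimpleGraph V)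

/-- The orientation of the 1-subdivision of `G`. -/
private def DAdj : V ⊕ G.edgeSet → V ⊕ G.edgeSet → Prop :=
  fun x y => ∃ (u : V) (e : G.edgeSet), x = Sum.inl u ∧ y = Sum.inr e ∧ u ∈ (e : Sym2 V)

/-- The vertex set of the subdivision of the induced subgraph on `S`. -/
private def sdv (S : Set V) : Set (V ⊕ G.edgeSet) :=
  Sum.inl '' S ∪ Sum.inr '' {e : G.edgeSet | ∀ u ∈ (e : Sym2 V), u ∈ S}

variable {G}

private lemma inl_mem_sdv {S : Set V} {u : V} : Sum.inl u ∈ sdv G S ↔ u ∈ S := by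
  simp [sdv]

private lemma inr_mem_sdv {S : Set V} {e : G.edgeSet} :
    Sum.inr e ∈ sdv G S ↔ ∀ u ∈ (e : Sym2 V), u ∈ S := by
  simp [sdv]

private lemma sdv_empty : sdv G (∅ : Set V) = ∅ := by
  ext x
  cases x with
  | inl u => simp [inl_mem_sdv]
  | inr e => simpa [inr_mem_sdv] using ⟨_, Sym2.out_fst_mem (e : Sym2 V)⟩

private lemma sdv_univ : sdv G (Set.univ : Set V) = Set.univ := by
  ext x
  cases x with
  | inl u => simp [inl_mem_sdv]
  | inr e => simp [inr_mem_sdv]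

private lemma not_dadj_inl (q : V ⊕ G.edgeSet) (w : V) : ¬ DAdj G q (Sum.inl w) := by
  rintro ⟨u, e, -, h, -⟩
  exact absurd h (by simp)

private lemma source_inl {A : Set (V ⊕ G.edgeSet)} {w : V} (h : Sum.inl w ∈ A) :
    IsSource (DAdj G) A (Sum.inl w) :=
  ⟨h, fun u _ => not_dadj_inl u w⟩

private lemma comp_subset_self {α : Type*} {Adj : α → α → Prop} {A : Set α} {v : α}
    (hv : v ∈ A) : Comp Adj A v ⊆ A := by
  intro x hx
  induction hx with
  | refl => exact hv
  | tail _ h2 _ =>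
    rcases h2 with ⟨_, hc, _⟩ | ⟨hc, _, _⟩ <;> exact hc

private lemma symAdj_symm_s8 {α : Type*} {Adj : α → α → Prop} {A : Set α} :
    Symmetric (symAdj Adj A) := fun _ _ h => h.symm

private lemma comp_eq_of_mem_s8 {α : Type*} {Adj : α → α → Prop} {A : Set α} {v w : α}
    (h : w ∈ Comp Adj A v) : Comp Adj A w = Comp Adj A v := by
  have hsym : ∀ {a b : α}, Relation.ReflTransGen (symAdj Adj A) a b →
      Relation.ReflTransGen (symAdj Adj A) b a := by
    intro a b hab
    induction hab with
    | refl => exact Relation.ReflTransGen.refl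
    | tail _ hbc ih => exact Relation.ReflTransGen.head (symAdj_symm_s8 hbc) ih
  ext x
  exact ⟨fun hx => Relation.ReflTransGen.trans h hx,
    fun hx => Relation.ReflTransGen.trans (hsym h) hx⟩

/-- Characterization of reachability from an original vertex: itself plus incident
subdivision vertices. -/
private lemma reach_inl {A : Set (V ⊕ G.edgeSet)} {w : V} {x : V ⊕ G.edgeSet}
    (hx : x ∈ Reach (DAdj G) A (Sum.inl w)) :
    x = Sum.inl w ∨ ∃ e : G.edgeSet, x = Sum.inr e ∧ x ∈ A ∧ w ∈ (e : Sym2 V) := by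
  induction hx with
  | refl => exact Or.inl rfl
  | tail _ h2 ih =>
    obtain ⟨hb, hc, u, e, hbu, hce, hue⟩ := h2
    rcases ih with h | ⟨e', he', -, -⟩
    · subst h
      obtain rfl : w = u := Sum.inl.injEq .. ▸ hbu
      exact Or.inr ⟨e, hce, hce ▸ hc, hue⟩
    · rw [he'] at hbu
      exact absurd hbu (by simp)

/-- Deleting a source `inl w` and everything it reaches from the subdivision of `C`
yields the subdivision of `C \ {w}`. -/
private lemma sdv_diff_reach {C : Set V} {w : V} (hw : w ∈ C) :
    sdv G C \ Reach (DAdj G) (sdv G C) (Sum.inl w) = sdv G (C \ {w}) := by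
  ext x
  constructor
  · rintro ⟨hx, hnr⟩
    cases x with
    | inl a =>
      have ha : a ∈ C := inl_mem_sdv.mp hx
      have hne : a ≠ w := by
        rintro rfl
        exact hnr Relation.ReflTransGen.refl
      exact inl_mem_sdv.mpr ⟨ha, hne⟩
    | inr e =>
      have he : ∀ u ∈ (e : Sym2 V), u ∈ C := inr_mem_sdv.mp hx
      have hwe : w ∉ (e : Sym2 V) := by
        intro hwe
        exact hnr (Relation.ReflTransGen.single
          ⟨inl_mem_sdv.mpr hw, hx, w, e, rfl, rfl, hwe⟩)
      refine inr_mem_sdv.mpr fun u hu => ⟨he u hu, ?_⟩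
      rintro rfl
      exact hwe hu
  · intro hx
    cases x with
    | inl a =>
      obtain ⟨ha, hne⟩ := inl_mem_sdv.mp hx
      refine ⟨inl_mem_sdv.mpr ha, fun hr => ?_⟩
      rcases reach_inl hr with h | ⟨e, he, -, -⟩
      · injection h with h'
        exact hne h'
      · exact Sum.inl_ne_inr he
    | inr e =>
      have he : ∀ u ∈ (e : Sym2 V), u ∈ C \ {w} := inr_mem_sdv.mp hx
      refine ⟨inr_mem_sdv.mpr fun u hu => (he u hu).1, fun hr => ?_⟩
      rcases reach_inl hr with h | ⟨e', he', -, hwe⟩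
      · exact Sum.inr_ne_inl h
      · obtain rfl : e' = e := by
          have := Sum.inr.injEq (α := V) .. ▸ he'.symm
          exact this.symm ▸ rfl
        exact (he w hwe).2 rfl

private lemma inr_eq_of_eq {e e' : G.edgeSet} (h : (Sum.inr e : V ⊕ G.edgeSet) = Sum.inr e') :
    e = e' := by
  injection h

/-- Lifting a path of `G` on `S` to the subdivision. -/
private lemma inl_mem_comp {S : Set V} {u w : V} (hw : w ∈ Comp G.Adj S u) :
    Sum.inl w ∈ Comp (DAdj G) (sdv G S) (Sum.inl u) := by
  induction hw with
  | refl => exact Relation.ReflTransGen.refl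
  | @tail b c _ h2 ih =>
    have hbc : b ∈ S ∧ c ∈ S ∧ G.Adj b c := by
      rcases h2 with ⟨h1, h2', h3⟩ | ⟨h1, h2', h3⟩
      · exact ⟨h1, h2', h3⟩
      · exact ⟨h2', h1, h3.symm⟩
    obtain ⟨hbS, hcS, hadj⟩ := hbc
    set e : G.edgeSet := ⟨s(b, c), G.mem_edgeSet.mpr hadj⟩ with he
    have heS : Sum.inr e ∈ sdv G S := by
      refine inr_mem_sdv.mpr fun x hx => ?_
      rcases Sym2.mem_iff.mp hx with rfl | rfl
      · exact hbS
      · exact hcS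
    have hb_mem : b ∈ (e : Sym2 V) := by rw [he]; exact Sym2.mem_mk_left b c
    have hc_mem : c ∈ (e : Sym2 V) := by rw [he]; exact Sym2.mem_mk_right b c
    have step1 : symAdj (DAdj G) (sdv G S) (Sum.inl b) (Sum.inr e) :=
      Or.inl ⟨inl_mem_sdv.mpr hbS, heS, b, e, rfl, rfl, hb_mem⟩
    have step2 : symAdj (DAdj G) (sdv G S) (Sum.inr e) (Sum.inl c) :=
      Or.inr ⟨inl_mem_sdv.mpr hcS, heS, c, e, rfl, rfl, hc_mem⟩
    exact (ih.tail step1).tail step2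

/-- Components of the subdivision correspond to components of `G`. -/
private lemma comp_inl {S : Set V} {u : V} (hu : u ∈ S) :
    Comp (DAdj G) (sdv G S) (Sum.inl u) = sdv G (Comp G.Adj S u) := by
  apply Set.Subset.antisymm
  · intro x hx
    induction hx with
    | refl => exact inl_mem_sdv.mpr Relation.ReflTransGen.refl
    | @tail b c _ h2 ih =>
      have key : ∀ (a : V) (e : G.edgeSet), a ∈ (e : Sym2 V) →
          Sum.inl a ∈ sdv G S → Sum.inr e ∈ sdv G S →
          (Sum.inl a ∈ sdv G (Comp G.Adj S u) → Sum.inr e ∈ sdv G (Comp G.Adj S u)) ∧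
          (Sum.inr e ∈ sdv G (Comp G.Adj S u) → Sum.inl a ∈ sdv G (Comp G.Adj S u)) := by
        intro a e hae haS heS
        constructor
        · intro haC
          have haC' : a ∈ Comp G.Adj S u := inl_mem_sdv.mp haC
          obtain ⟨b', heb⟩ := Sym2.mem_iff_exists.mp hae
          have hadj : G.Adj a b' := by
            have := e.2
            rw [heb] at this
            exact G.mem_edgeSet.mp this
          have hb'S : b' ∈ S := by
            have := inr_mem_sdv.mp heS
            exact this b' (by rw [heb]; exact Sym2.mem_mk_right a b')
          have haS' : a ∈ S := inl_mem_sdv.mp haS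
          have hb'C : b' ∈ Comp G.Adj S u :=
            haC'.tail (Or.inl ⟨haS', hb'S, hadj⟩)
          refine inr_mem_sdv.mpr fun x hx => ?_
          rw [heb] at hx
          rcases Sym2.mem_iff.mp hx with rfl | rfl
          · exact haC'
          · exact hb'C
        · intro heC
          exact inl_mem_sdv.mpr (inr_mem_sdv.mp heC a hae)
      rcases h2 with ⟨hbA, hcA, a, e, hba, hce, hae⟩ | ⟨hcA, hbA, a, e, hca, hbe, hae⟩
      · subst hba; subst hce
        exact (key a e hae hbA hcA).1 ih
      · subst hca; subst hbe
        exact (key a e hae hcA hbA).2 ih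
  · intro x hx
    cases x with
    | inl w => exact inl_mem_comp (inl_mem_sdv.mp hx)
    | inr e =>
      have he : ∀ v ∈ (e : Sym2 V), v ∈ Comp G.Adj S u := inr_mem_sdv.mp hx
      set a := (e : Sym2 V).out.1 with ha
      have hae : a ∈ (e : Sym2 V) := Sym2.out_fst_mem _
      have haC : a ∈ Comp G.Adj S u := he a hae
      have haS : a ∈ S := comp_subset_self hu haC
      have heS : Sum.inr e ∈ sdv G S :=
        inr_mem_sdv.mpr fun v hv => comp_subset_self hu (he v hv)
      exact (inl_mem_comp haC).tail
        (Or.inl ⟨inl_mem_sdv.mpr haS, heS, a, e, rfl, rfl, hae⟩)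

/-- Treedepth elimination forests lift to the subdivision. -/
private lemma tdLE_to_dtdLE {S : Set V} {n : ℕ} (h : tdLE G S n) :
    dtdLE (DAdj G) (sdv G S) n := by
  induction h with
  | empty n => rw [sdv_empty]; exact dtdLE.empty n
  | @step A n r hr hrec ih =>
    classical
    set pj : V ⊕ G.edgeSet → V := Sum.elim id (fun e => (e : Sym2 V).out.1) with hpj
    refine dtdLE.step _ n (fun x => Sum.inl (r (pj x))) ?_ ?_ <;>
    · intro x hx
      cases x with
      | inl u =>
        have hu : u ∈ A := inl_mem_sdv.mp hx
        have hcomp : Comp (DAdj G) (sdv G A) (Sum.inl u) = sdv G (Comp G.Adj A u) :=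
          comp_inl hu
        have hru : r u ∈ Comp G.Adj A u := hr u hu
        first
        | · -- source goal
            rw [hcomp]
            exact source_inl (inl_mem_sdv.mpr hru)
        | · -- recursion goal
            show dtdLE (DAdj G) (Comp (DAdj G) (sdv G A) (Sum.inl u) \
              Reach (DAdj G) (Comp (DAdj G) (sdv G A) (Sum.inl u)) (Sum.inl (r u))) n
            rw [hcomp, sdv_diff_reach hru]
            exact ih u hu
      | inr e =>
        have he : ∀ v ∈ (e : Sym2 V), v ∈ A := inr_mem_sdv.mp hx
        have hae : (e : Sym2 V).out.1 ∈ (e : Sym2 V) := Sym2.out_fst_mem _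
        set a := (e : Sym2 V).out.1
        have haA : a ∈ A := he a hae
        have hstep : Sum.inl a ∈ Comp (DAdj G) (sdv G A) (Sum.inr e) :=
          Relation.ReflTransGen.single
            (Or.inr ⟨inl_mem_sdv.mpr haA, hx, a, e, rfl, rfl, hae⟩)
        have hcompeq : Comp (DAdj G) (sdv G A) (Sum.inr e) =
            Comp (DAdj G) (sdv G A) (Sum.inl a) := (comp_eq_of_mem_s8 hstep).symm
        have hcomp : Comp (DAdj G) (sdv G A) (Sum.inr e) = sdv G (Comp G.Adj A a) := by
          rw [hcompeq]; exact comp_inl haA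
        have hra : r a ∈ Comp G.Adj A a := hr a haA
        first
        | · rw [hcomp]
            exact source_inl (inl_mem_sdv.mpr hra)
        | · show dtdLE (DAdj G) (Comp (DAdj G) (sdv G A) (Sum.inr e) \
              Reach (DAdj G) (Comp (DAdj G) (sdv G A) (Sum.inr e)) (Sum.inl (r a))) n
            rw [hcomp, sdv_diff_reach hra]
            exact ih a haA

private lemma sdv_eq_empty {S : Set V} (h : sdv G S = ∅) : S = ∅ := by
  ext u
  simp only [Set.mem_empty_iff_false, iff_false]
  intro hu
  have : Sum.inl u ∈ sdv G S := inl_mem_sdv.mpr hu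
  rw [h] at this
  exact this

/-- DAG elimination forests of the subdivision project back to `G`. -/
private lemma dtdLE_to_tdLE : ∀ (n : ℕ) (S : Set V),
    dtdLE (DAdj G) (sdv G S) n → tdLE G S n := by
  intro n
  induction n with
  | zero =>
    intro S h
    have hA : ∀ A : Set (V ⊕ G.edgeSet), dtdLE (DAdj G) A 0 → A = ∅ := by
      intro A hA
      cases hA
      rfl
    rw [sdv_eq_empty (hA _ h)]
    exact tdLE.empty 0
  | succ n ih =>
    intro S h
    generalize hAS : sdv G S = A at h
    cases h with
    | empty =>
      rw [sdv_eq_empty hAS]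
      exact tdLE.empty (n + 1)
    | step _ _ s hs hrec =>
      subst hAS
      classical
      have key : ∀ u ∈ S, ∃ w : V, s (Sum.inl u) = Sum.inl w ∧ w ∈ Comp G.Adj S u := by
        intro u hu
        have hsrc := hs (Sum.inl u) (inl_mem_sdv.mpr hu)
        rw [comp_inl hu] at hsrc
        obtain ⟨hmem, hnone⟩ := hsrc
        cases hx : s (Sum.inl u) with
        | inl w =>
          rw [hx] at hmem
          exact ⟨w, rfl, inl_mem_sdv.mp hmem⟩
        | inr e =>
          exfalso
          rw [hx] at hmem hnone
          have he : ∀ v ∈ (e : Sym2 V), v ∈ Comp G.Adj S u := inr_mem_sdv.mp hmem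
          have hae : (e : Sym2 V).out.1 ∈ (e : Sym2 V) := Sym2.out_fst_mem _
          exact hnone (Sum.inl (e : Sym2 V).out.1)
            (inl_mem_sdv.mpr (he _ hae)) ⟨_, e, rfl, rfl, hae⟩
      set r : V → V := fun u => if hu : u ∈ S then (key u hu).choose else u with hrdef
      refine tdLE.step S n r ?_ ?_
      · intro u hu
        have := (key u hu).choose_spec.2
        simpa [hrdef, hu] using this
      · intro u hu
        apply ih
        have hc := hrec (Sum.inl u) (inl_mem_sdv.mpr hu)
        rw [comp_inl hu, (key u hu).choose_spec.1] at hc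
        have hrw : r u = (key u hu).choose := by simp [hrdef, hu]
        rw [hrw]
        rwa [sdv_diff_reach (key u hu).choose_spec.2] at hc

/-- The DAG treedepth of the oriented subdivision equals the treedepth of `G`. -/
private lemma dtd_sdv_eq_td : dtd (DAdj G) = td G := by
  unfold dtd td
  congr 1
  ext n
  constructor
  · intro h
    exact dtdLE_to_tdLE n Set.univ (by rwa [sdv_univ])
  · intro h
    have := tdLE_to_dtdLE h
    rwa [sdv_univ] at this

end Subdivision

/-- if `G` is a minor obstruction for treedepth `k - 1`
(td(G) = k, every proper minor has treedepth ≤ k - 1), then the 1-subdivision of `G`,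
oriented with the original vertices as sources and each subdivision vertex of
indegree 2, has DAG treedepth exactly `k`. -/
theorem dtd_subdivision_of_td_obstruction {V : Type} [Fintype V] (G : SimpleGraph V)
    (k : ℕ) (htd : td G = k)
    (hobs : ∀ (W : Type) (M : SimpleGraph W), IsMinor M G → IsEmpty (M ≃g G) →
      td M ≤ k - 1) :
    dtd (fun x y : V ⊕ G.edgeSet =>
      ∃ (u : V) (e : G.edgeSet), x = Sum.inl u ∧ y = Sum.inr e ∧ u ∈ (e : Sym2 V)) = k := by
  exact (dtd_sdv_eq_td (G := G)).trans htd

end DagPaper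
end

section
/- The path on 10 vertices P_10, viewed as an undirected pattern, satisfies dtd(P_10) ≤ 3: for every acyclic orientation of P_10, the resulting DAG has DAG treedepth at most 3. -/
open Set

namespace DagPaper

variable {V : Type*}

-- ====== auxiliary development ======

def DRel (d : ℕ → Bool) : Fin 10 → Fin 10 → Prop :=
  fun u v => (v.val = u.val + 1 ∧ d u.val = true) ∨ (u.val = v.val + 1 ∧ d v.val = false)

def Iset (a b : ℕ) : Set (Fin 10) := {v : Fin 10 | a ≤ v.val ∧ v.val < b}

lemma mem_Iset {a b : ℕ} {v : Fin 10} : v ∈ Iset a b ↔ a ≤ v.val ∧ v.val < b := Iff.rfl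

def lft (d : ℕ → Bool) (a : ℕ) : ℕ → ℕ
  | 0 => 0
  | s+1 => if a ≤ s ∧ d s = false then lft d a s else s+1

def rgtAux (d : ℕ → Bool) (b : ℕ) : ℕ → ℕ → ℕ
  | 0, s => s
  | f+1, s => if s+1 < b ∧ d s = true then rgtAux d b f (s+1) else s

def rgt (d : ℕ → Bool) (b s : ℕ) : ℕ := rgtAux d b 10 s

def isSrc (d : ℕ → Bool) (a b s : ℕ) : Bool :=
  (s == a || !(d (s-1))) && (s+1 == b || d s)

def good (d : ℕ → Bool) : ℕ → ℕ → ℕ → Bool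
  | 0, a, b => decide (b ≤ a)
  | n+1, a, b => decide (b ≤ a) ||
      (List.range 10).any fun s => decide (a ≤ s) && decide (s < b) &&
        isSrc d a b s && good d n a (lft d a s) && good d n (rgt d b s + 1) b

def ext9 (f : Fin 9 → Bool) : ℕ → Bool := fun i => if h : i < 9 then f ⟨i, h⟩ else true

set_option maxRecDepth 10000 in
lemma allgood : ∀ f : Fin 9 → Bool, good (ext9 f) 3 0 10 = true := by decide

lemma lft_spec (d : ℕ → Bool) (a : ℕ) : ∀ s, a ≤ s →
    a ≤ lft d a s ∧ lft d a s ≤ s ∧ (∀ i, lft d a s ≤ i → i < s → d i = false) ∧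
      (lft d a s = a ∨ d (lft d a s - 1) = true) := by
  intro s
  induction s with
  | zero =>
    intro h
    simp only [lft]
    exact ⟨h, le_refl 0, fun i h1 h2 => absurd h2 (by omega), Or.inl (by omega)⟩
  | succ s ih =>
    intro h
    by_cases hc : a ≤ s ∧ d s = false
    · have H := ih hc.1
      simp only [lft, if_pos hc]
      refine ⟨H.1, by omega, ?_, H.2.2.2⟩
      intro i h1 h2
      rcases Nat.lt_or_ge i s with h3 | h3
      · exact H.2.2.1 i h1 h3
      · have : i = s := by omega
        subst this; exact hc.2
    · simp only [lft, if_neg hc]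
      refine ⟨h, le_refl _, fun i h1 h2 => absurd h2 (by omega), ?_⟩
      rcases Nat.lt_or_ge a (s+1) with h3 | h3
      · right
        have has : a ≤ s := by omega
        have : d s = true := by
          rcases Bool.eq_false_or_eq_true (d s) with h4 | h4
          · exact h4
          · exact absurd ⟨has, h4⟩ hc
        simpa using this
      · left; omega

lemma rgtAux_spec (d : ℕ → Bool) (b : ℕ) : ∀ f s, s < b → b ≤ f + s + 1 →
    s ≤ rgtAux d b f s ∧ rgtAux d b f s < b ∧
      (∀ i, s ≤ i → i < rgtAux d b f s → d i = true) ∧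
      (rgtAux d b f s + 1 = b ∨ d (rgtAux d b f s) = false) := by
  intro f
  induction f with
  | zero =>
    intro s h1 h2
    simp only [rgtAux]
    exact ⟨le_refl _, h1, fun i hi1 hi2 => absurd hi2 (by omega), Or.inl (by omega)⟩
  | succ f ih =>
    intro s h1 h2
    by_cases hc : s+1 < b ∧ d s = true
    · have H := ih (s+1) hc.1 (by omega)
      simp only [rgtAux, if_pos hc]
      refine ⟨by omega, H.2.1, ?_, H.2.2.2⟩
      intro i hi1 hi2
      rcases Nat.lt_or_ge i (s+1) with h3 | h3
      · have : i = s := by omega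
        subst this; exact hc.2
      · exact H.2.2.1 i h3 hi2
    · simp only [rgtAux, if_neg hc]
      refine ⟨le_refl _, h1, fun i hi1 hi2 => absurd hi2 (by omega), ?_⟩
      rcases Nat.lt_or_ge (s+1) b with h3 | h3
      · right
        rcases Bool.eq_false_or_eq_true (d s) with h4 | h4
        · exact absurd ⟨h3, h4⟩ hc
        · exact h4
      · left; omega

lemma symAdj_step {d : ℕ → Bool} {A : Set (Fin 10)} {u w : Fin 10}
    (hu : u ∈ A) (hw : w ∈ A) (h : w.val = u.val + 1) : symAdj (DRel d) A u w := by
  rcases Bool.eq_false_or_eq_true (d u.val) with h4 | h4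
  · exact Or.inl ⟨hu, hw, Or.inl ⟨h, h4⟩⟩
  · exact Or.inr ⟨hw, hu, Or.inr ⟨h, h4⟩⟩

lemma symAdj_symm_s9 {d : ℕ → Bool} {A : Set (Fin 10)} : Symmetric (symAdj (DRel d) A) :=
  fun _ _ h => Or.symm h

lemma rtg_up {d : ℕ → Bool} {A : Set (Fin 10)} {c e : ℕ} (he : e ≤ 10)
    (hsub : ∀ x : Fin 10, c ≤ x.val → x.val < e → x ∈ A) {v : Fin 10}
    (hv : c ≤ v.val ∧ v.val < e) :
    ∀ k, (hk : v.val + k < e) →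
      Relation.ReflTransGen (symAdj (DRel d) A) v ⟨v.val + k, by omega⟩ := by
  intro k
  induction k with
  | zero =>
    intro hk
    have : (⟨v.val + 0, by omega⟩ : Fin 10) = v := by ext; simp
    rw [this]
  | succ k ih =>
    intro hk
    refine Relation.ReflTransGen.tail (ih (by omega)) ?_
    refine symAdj_step (hsub _ ?_ ?_) (hsub _ ?_ ?_) ?_
    · show c ≤ v.val + k; omega
    · show v.val + k < e; omega
    · show c ≤ v.val + (k+1); omega
    · show v.val + (k+1) < e; omega
    · show v.val + (k+1) = v.val + k + 1; omega

lemma interval_rtg {d : ℕ → Bool} {A : Set (Fin 10)} {c e : ℕ} (he : e ≤ 10)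
    (hsub : ∀ x : Fin 10, c ≤ x.val → x.val < e → x ∈ A) {v u : Fin 10}
    (hv : c ≤ v.val ∧ v.val < e) (hu : c ≤ u.val ∧ u.val < e) :
    Relation.ReflTransGen (symAdj (DRel d) A) v u := by
  rcases le_or_gt v.val u.val with h | h
  · have H := rtg_up (d := d) he hsub hv (u.val - v.val) (by omega)
    have : (⟨v.val + (u.val - v.val), by omega⟩ : Fin 10) = u := by ext; simp; omega
    rwa [this] at H
  · have H := rtg_up (d := d) he hsub hu (v.val - u.val) (by omega)
    have : (⟨u.val + (v.val - u.val), by omega⟩ : Fin 10) = v := by ext; simp; omega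
    rw [this] at H
    exact (@Relation.ReflTransGen.symmetric _ _ ⟨fun _ _ h => symAdj_symm_s9 h⟩).symm _ _ H

lemma comp_eq {d : ℕ → Bool} {A : Set (Fin 10)} {c e : ℕ} (he : e ≤ 10)
    (hsub : ∀ x : Fin 10, c ≤ x.val → x.val < e → x ∈ A)
    (hc : ∀ x : Fin 10, x.val + 1 = c → x ∉ A)
    (hbd : ∀ x : Fin 10, x.val = e → x ∉ A)
    {v : Fin 10} (hv : v ∈ Iset c e) :
    Comp (DRel d) A v = Iset c e := by
  apply Set.eq_of_subset_of_subset
  · intro u hu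
    simp only [Comp, Set.mem_setOf_eq] at hu
    induction hu with
    | refl => exact hv
    | tail h1 h2 ih =>
      rename_i u1 u2
      have hu1 : c ≤ u1.val ∧ u1.val < e := ih
      have hmem : u1 ∈ A ∧ u2 ∈ A ∧ (u2.val = u1.val + 1 ∨ u1.val = u2.val + 1) := by
        rcases h2 with ⟨m1, m2, hD⟩ | ⟨m1, m2, hD⟩
        · exact ⟨m1, m2, by rcases hD with ⟨h3, _⟩ | ⟨h3, _⟩ <;> omega⟩
        · exact ⟨m2, m1, by rcases hD with ⟨h3, _⟩ | ⟨h3, _⟩ <;> omega⟩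
      rcases hmem.2.2 with h3 | h3
      · constructor
        · omega
        · by_contra hcon
          have : u2.val = e := by omega
          exact hbd u2 this hmem.2.1
      · constructor
        · by_contra hcon
          have : u2.val + 1 = c := by omega
          exact hc u2 this hmem.2.1
        · omega
  · intro u hu
    exact interval_rtg he hsub hv hu

lemma reach_up {d : ℕ → Bool} {a b r : ℕ} (hb : b ≤ 10) {s : Fin 10}
    (ha : a ≤ s.val) (hrb : r < b)
    (hright : ∀ i, s.val ≤ i → i < r → d i = true) :
    ∀ k, (hk : s.val + k ≤ r) →
      Relation.ReflTransGen (restrAdj (DRel d) (Iset a b)) s ⟨s.val + k, by omega⟩ := by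
  intro k
  induction k with
  | zero =>
    intro hk
    have : (⟨s.val + 0, by omega⟩ : Fin 10) = s := by ext; simp
    rw [this]
  | succ k ih =>
    intro hk
    refine Relation.ReflTransGen.tail (ih (by omega)) ?_
    refine ⟨⟨?_, ?_⟩, ⟨?_, ?_⟩, Or.inl ⟨?_, hright (s.val + k) (by omega) (by omega)⟩⟩
    · show a ≤ s.val + k; omega
    · show s.val + k < b; omega
    · show a ≤ s.val + (k+1); omega
    · show s.val + (k+1) < b; omega
    · show s.val + (k+1) = s.val + k + 1; omega

lemma reach_down {d : ℕ → Bool} {a b l : ℕ} (hb : b ≤ 10) {s : Fin 10}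
    (hal : a ≤ l) (hls : l ≤ s.val) (hsb : s.val < b)
    (hleft : ∀ i, l ≤ i → i < s.val → d i = false) :
    ∀ k, (hk : k ≤ s.val - l) →
      Relation.ReflTransGen (restrAdj (DRel d) (Iset a b)) s ⟨s.val - k, by omega⟩ := by
  intro k
  induction k with
  | zero =>
    intro hk
    have : (⟨s.val - 0, by omega⟩ : Fin 10) = s := by ext; simp
    rw [this]
  | succ k ih =>
    intro hk
    refine Relation.ReflTransGen.tail (ih (by omega)) ?_
    refine ⟨⟨?_, ?_⟩, ⟨?_, ?_⟩, Or.inr ⟨?_, hleft (s.val - (k+1)) (by omega) (by omega)⟩⟩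
    · show a ≤ s.val - k; omega
    · show s.val - k < b; omega
    · show a ≤ s.val - (k+1); omega
    · show s.val - (k+1) < b; omega
    · show s.val - k = s.val - (k+1) + 1; omega

lemma reach_eq {d : ℕ → Bool} {a b l r : ℕ} (hb : b ≤ 10) {s : Fin 10}
    (ha : a ≤ s.val) (hsb : s.val < b)
    (hal : a ≤ l) (hls : l ≤ s.val) (hsr : s.val ≤ r) (hrb : r < b)
    (hleft : ∀ i, l ≤ i → i < s.val → d i = false)
    (hlb : l = a ∨ d (l-1) = true)
    (hright : ∀ i, s.val ≤ i → i < r → d i = true)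
    (hrbd : r + 1 = b ∨ d r = false) :
    Reach (DRel d) (Iset a b) s = Iset l (r+1) := by
  apply Set.eq_of_subset_of_subset
  · intro u hu
    simp only [Reach, Set.mem_setOf_eq] at hu
    induction hu with
    | refl => exact ⟨hls, by omega⟩
    | tail h1 h2 ih =>
      rename_i u1 u2
      obtain ⟨hm1, hm2, hD⟩ := h2
      have hu1 : l ≤ u1.val ∧ u1.val < r + 1 := ih
      rcases hD with ⟨he1, he2⟩ | ⟨he1, he2⟩
      · refine ⟨by omega, ?_⟩
        by_contra hcon
        have hur : u1.val = r := by omega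
        rw [hur] at he2
        have : r + 1 < b := by
          have := hm2.2
          omega
        rcases hrbd with h4 | h4
        · omega
        · rw [he2] at h4; exact absurd h4 (by simp)
      · refine ⟨?_, by omega⟩
        by_contra hcon
        have hu2l : u2.val + 1 = l := by omega
        rcases hlb with h4 | h4
        · have := hm2.1
          omega
        · have : u2.val = l - 1 := by omega
          rw [this] at he2
          rw [he2] at h4; exact absurd h4 (by simp)
  · intro u hu
    obtain ⟨hul, hur⟩ := hu
    simp only [Reach, Set.mem_setOf_eq]
    rcases le_or_gt s.val u.val with h | h
    · have H := reach_up hb ha hrb hright (u.val - s.val) (by omega)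
      have : (⟨s.val + (u.val - s.val), by omega⟩ : Fin 10) = u := by ext; simp; omega
      rwa [this] at H
    · have H := reach_down hb hal hls hsb hleft (s.val - u.val) (by omega)
      have : (⟨s.val - (s.val - u.val), by omega⟩ : Fin 10) = u := by ext; simp; omega
      rwa [this] at H

lemma isSrc_elim {d : ℕ → Bool} {a b s : ℕ} (h : isSrc d a b s = true) :
    (s = a ∨ d (s-1) = false) ∧ (s + 1 = b ∨ d s = true) := by
  simp only [isSrc, Bool.and_eq_true, Bool.or_eq_true, beq_iff_eq, Bool.not_eq_true'] at h
  exact h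

lemma isSource_of {d : ℕ → Bool} {a b : ℕ} (hb : b ≤ 10) {s : Fin 10}
    (ha : a ≤ s.val) (hsb : s.val < b) (hsrc : isSrc d a b s.val = true) :
    IsSource (DRel d) (Iset a b) s := by
  obtain ⟨h1, h2⟩ := isSrc_elim hsrc
  refine ⟨⟨ha, hsb⟩, ?_⟩
  intro u hu hD
  rcases hD with ⟨he1, he2⟩ | ⟨he1, he2⟩
  · -- s = u + 1, d u = true
    rcases h1 with h3 | h3
    · have := hu.1; omega
    · have : u.val = s.val - 1 := by omega
      rw [this] at he2; rw [he2] at h3; exact absurd h3 (by simp)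
  · -- u = s + 1, d s = false
    rcases h2 with h3 | h3
    · have := hu.2; omega
    · rw [he2] at h3; exact absurd h3 (by simp)

lemma dtdLE_of_empty {Adj : V → V → Prop} {A : Set V} {n : ℕ} (hA : A = ∅) :
    dtdLE Adj A n := hA ▸ dtdLE.empty n

lemma dtdLE_zero_inv {Adj : V → V → Prop} {A : Set V} (h : dtdLE Adj A 0) : A = ∅ := by
  cases h; rfl

lemma dtdLE_succ_inv {Adj : V → V → Prop} {A : Set V} {n : ℕ} (h : dtdLE Adj A (n+1)) :
    A = ∅ ∨ ∃ s : V → V, (∀ v ∈ A, IsSource Adj (Comp Adj A v) (s v)) ∧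
      ∀ v ∈ A, dtdLE Adj (Comp Adj A v \ Reach Adj (Comp Adj A v) (s v)) n := by
  cases h with
  | empty => exact Or.inl rfl
  | step A n s hs h => exact Or.inr ⟨s, hs, h⟩

lemma Iset_empty {a b : ℕ} (h : b ≤ a) : Iset a b = ∅ := by
  ext v; simp [Iset]; omega

lemma dtdLE_union {d : ℕ → Bool} {a l r' b n : ℕ} (hb : b ≤ 10) (hal : a ≤ l)
    (hlr : l < r') (hrb : r' ≤ b)
    (dA : dtdLE (DRel d) (Iset a l) n) (dB : dtdLE (DRel d) (Iset r' b) n) :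
    dtdLE (DRel d) (Iset a l ∪ Iset r' b) n := by
  have hl10 : l ≤ 10 := by omega
  match n with
  | 0 =>
    apply dtdLE_of_empty
    rw [dtdLE_zero_inv dA, dtdLE_zero_inv dB, Set.empty_union]
  | n+1 =>
    rcases dtdLE_succ_inv dA with hA | ⟨sA, hsA, hA⟩
    · rw [hA, Set.empty_union]; exact dB
    rcases dtdLE_succ_inv dB with hB | ⟨sB, hsB, hB⟩
    · rw [hB, Set.union_empty]; exact dA
    refine dtdLE.step _ n (fun v => if v.val < l then sA v else sB v) ?_ ?_
    all_goals {
      intro v hv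
      rcases hv with hv | hv
      · have hvl : v.val < l := hv.2
        have hcompU : Comp (DRel d) (Iset a l ∪ Iset r' b) v = Iset a l := by
          apply comp_eq hl10
          · intro x h1 h2; exact Or.inl ⟨h1, h2⟩
          · intro x hx hmem
            rcases hmem with hm | hm
            · have := hm.1; omega
            · have := hm.1; omega
          · intro x hx hmem
            rcases hmem with hm | hm
            · have := hm.2; omega
            · have := hm.1; omega
          · exact hv
        have hcompA : Comp (DRel d) (Iset a l) v = Iset a l := by
          apply comp_eq hl10
          · intro x h1 h2; exact ⟨h1, h2⟩
          · intro x hx hmem; have := hmem.1; omega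
          · intro x hx hmem; have := hmem.2; omega
          · exact hv
        have hsv : (if v.val < l then sA v else sB v) = sA v := by
          simp [hvl]
        rw [hcompU, hsv, ← hcompA]
        first
        | exact hsA v hv
        | exact hA v hv
      · have hvl : ¬ v.val < l := by have := hv.1; omega
        have hcompU : Comp (DRel d) (Iset a l ∪ Iset r' b) v = Iset r' b := by
          apply comp_eq hb
          · intro x h1 h2; exact Or.inr ⟨h1, h2⟩
          · intro x hx hmem
            rcases hmem with hm | hm
            · have := hm.2; omega
            · have := hm.1; omega
          · intro x hx hmem
            rcases hmem with hm | hm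
            · have := hm.2; omega
            · have := hm.2; omega
          · exact hv
        have hcompB : Comp (DRel d) (Iset r' b) v = Iset r' b := by
          apply comp_eq hb
          · intro x h1 h2; exact ⟨h1, h2⟩
          · intro x hx hmem; have := hmem.1; omega
          · intro x hx hmem; have := hmem.2; omega
          · exact hv
        have hsv : (if v.val < l then sA v else sB v) = sB v := by
          simp [hvl]
        rw [hcompU, hsv, ← hcompB]
        first
        | exact hsB v hv
        | exact hB v hv
    }

lemma good_sound (d : ℕ → Bool) : ∀ n a b, b ≤ 10 → good d n a b = true →
    dtdLE (DRel d) (Iset a b) n := by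
  intro n
  induction n with
  | zero =>
    intro a b hb hg
    simp only [good, decide_eq_true_eq] at hg
    exact dtdLE_of_empty (Iset_empty hg)
  | succ n ih =>
    intro a b hb hg
    simp only [good, Bool.or_eq_true, decide_eq_true_eq, List.any_eq_true,
      Bool.and_eq_true, List.mem_range] at hg
    rcases hg with hg | ⟨s, hs10, ⟨⟨⟨has, hsb⟩, hsrc⟩, hgl⟩, hgr⟩
    · exact dtdLE_of_empty (Iset_empty hg)
    have hLs := lft_spec d a s has
    set l := lft d a s with hldef
    have hRs := rgtAux_spec d b 10 s hsb (by omega)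
    set r := rgtAux d b 10 s with hrdef
    have hsfin : s < 10 := by omega
    set sfin : Fin 10 := ⟨s, hsfin⟩ with hsfindef
    have hcomp : ∀ v ∈ Iset a b, Comp (DRel d) (Iset a b) v = Iset a b := by
      intro v hv
      apply comp_eq hb
      · intro x h1 h2; exact ⟨h1, h2⟩
      · intro x hx hmem; have := hmem.1; omega
      · intro x hx hmem; have := hmem.2; omega
      · exact hv
    refine dtdLE.step _ n (fun _ => sfin) ?_ ?_
    · intro v hv
      rw [hcomp v hv]
      exact isSource_of hb has hsb hsrc
    · intro v hv
      rw [hcomp v hv]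
      have hreach : Reach (DRel d) (Iset a b) sfin = Iset l (r+1) := by
        exact reach_eq hb has hsb hLs.1 hLs.2.1 hRs.1 hRs.2.1 hLs.2.2.1 hLs.2.2.2
          hRs.2.2.1 hRs.2.2.2
      rw [hreach]
      have hsplit : Iset a b \ Iset l (r+1) = Iset a l ∪ Iset (r+1) b := by
        ext x; simp [Iset]; omega
      rw [hsplit]
      refine dtdLE_union hb hLs.1 (by omega) (by omega) ?_ ?_
      · exact ih a l (by omega) hgl
      · exact ih (r+1) b hb hgr

/-- every acyclic orientation of the path on 10 vertices has dtd ≤ 3. -/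
theorem p10_dtd_le_three (Adj : Fin 10 → Fin 10 → Prop)
    (h : IsAcyclicOrientation (SimpleGraph.pathGraph 10) Adj) : dtd Adj ≤ 3 := by
  classical
  set f : Fin 9 → Bool := fun i => decide (Adj ⟨i.val, by omega⟩ ⟨i.val + 1, by omega⟩)
    with hf
  have hAdj : Adj = DRel (ext9 f) := by
    funext u v
    apply propext
    constructor
    · intro hA
      have hG := h.subset u v hA
      rw [SimpleGraph.pathGraph_adj] at hG
      rcases hG with hG | hG
      · left
        refine ⟨hG.symm, ?_⟩
        have h9 : u.val < 9 := by omega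
        show ext9 f u.val = true
        simp only [ext9, dif_pos h9, hf, decide_eq_true_eq]
        have h1 : (⟨u.val, by omega⟩ : Fin 10) = u := rfl
        have h2 : (⟨u.val + 1, by omega⟩ : Fin 10) = v := Fin.ext (by simp [← hG])
        rw [h1, h2]
        exact hA
      · right
        refine ⟨hG.symm, ?_⟩
        have h9 : v.val < 9 := by omega
        show ext9 f v.val = false
        simp only [ext9, dif_pos h9, hf, decide_eq_false_iff_not]
        have h1 : (⟨v.val, by omega⟩ : Fin 10) = v := rfl
        have h2 : (⟨v.val + 1, by omega⟩ : Fin 10) = u := Fin.ext (by simp [← hG])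
        rw [h1, h2]
        exact h.antisymm u v hA
    · intro hD
      rcases hD with ⟨h1, h2⟩ | ⟨h1, h2⟩
      · have h9 : u.val < 9 := by omega
        simp only [ext9, dif_pos h9, hf, decide_eq_true_eq] at h2
        have e1 : (⟨u.val, by omega⟩ : Fin 10) = u := rfl
        have e2 : (⟨u.val + 1, by omega⟩ : Fin 10) = v := Fin.ext (by simp [h1])
        rwa [e1, e2] at h2
      · have h9 : v.val < 9 := by omega
        simp only [ext9, dif_pos h9, hf, decide_eq_false_iff_not] at h2
        have e1 : (⟨v.val, by omega⟩ : Fin 10) = v := rfl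
        have e2 : (⟨v.val + 1, by omega⟩ : Fin 10) = u := Fin.ext (by simp [h1])
        rw [e1, e2] at h2
        have hG : (SimpleGraph.pathGraph 10).Adj v u := by
          rw [SimpleGraph.pathGraph_adj]; left; omega
        rcases h.covers v u hG with hvu | huv
        · exact absurd hvu h2
        · exact huv
  have huniv : (Set.univ : Set (Fin 10)) = Iset 0 10 := by
    ext v
    simp only [Set.mem_univ, true_iff, mem_Iset]
    exact ⟨Nat.zero_le _, v.isLt⟩
  have h3 : dtdLE Adj Set.univ 3 := by
    rw [hAdj, huniv]
    exact good_sound (ext9 f) 3 0 10 (le_refl 10) (allgood f)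
  exact Nat.sInf_le h3

end DagPaper
end

section
/- Let H be an undirected graph and let H' be obtained from H by contracting one edge. Then dtw(H') ≤ dtw(H), where dtw denotes DAG treewidth of an undirected graph (the maximum over acyclic orientations of the DAG treewidth of the resulting DAG). -/
open Set

namespace DagPaper

variable {V : Type*}

/-! ### Auxiliary development for Statement 12 -/

section Statement12Aux

variable {V₀ W₀ : Type*}

lemma mem_reach_univ {Adj : V₀ → V₀ → Prop} {s p : V₀} :
    p ∈ Reach Adj Set.univ s ↔ Relation.ReflTransGen Adj s p := by
  constructor
  · intro h; exact Relation.ReflTransGen.mono (fun a b (hab : restrAdj Adj Set.univ a b) => hab.2.2) _ _ h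
  · intro h; exact Relation.ReflTransGen.mono (p := restrAdj Adj Set.univ) (fun a b hab => ⟨trivial, trivial, hab⟩) _ _ h

lemma mem_reachSet_univ {Adj : V₀ → V₀ → Prop} {S : Set V₀} {p : V₀} :
    p ∈ ReachSet Adj Set.univ S ↔ ∃ s, s ∈ S ∧ p ∈ Reach Adj Set.univ s := by
  simp [ReachSet]

/-- `x` is reachable from some source. -/
def SRch (Adj : V₀ → V₀ → Prop) (x : V₀) : Prop :=
  ∃ z, IsSource Adj Set.univ z ∧ Relation.ReflTransGen Adj z x

lemma onPath_symm {ι : Type*} {T : SimpleGraph ι} {i k j : ι} (h : OnPath T i k j) :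
    OnPath T j k i := by
  intro p
  have := h p.reverse
  simpa [SimpleGraph.Walk.support_reverse] using this

lemma onPath_median {ι : Type*} {T : SimpleGraph ι} {i k j : ι} (m : ι) (h : OnPath T i k j) :
    OnPath T i k m ∨ OnPath T j k m := by
  by_contra hc
  obtain ⟨h1, h2⟩ := not_or.mp hc
  simp only [OnPath, not_forall] at h1 h2
  obtain ⟨p, hp⟩ := h1
  obtain ⟨q, hq⟩ := h2
  have := h (p.append q.reverse)
  rw [SimpleGraph.Walk.mem_support_append_iff] at this
  rcases this with h3 | h3
  · exact hp h3
  · rw [SimpleGraph.Walk.support_reverse] at h3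
    exact hq (List.mem_reverse.mp h3)

/-- All data needed to transfer a DAG tree decomposition through an edge contraction. -/
structure LiftData (Adj : V₀ → V₀ → Prop) (Adj' : W₀ → W₀ → Prop) (f : V₀ → W₀)
    (w₁ w₂ : V₀) : Prop where
  hne : w₁ ≠ w₂
  hf : f w₁ = f w₂
  hfib : ∀ x y, f x = f y → x ≠ y → (x = w₁ ∧ y = w₂) ∨ (x = w₂ ∧ y = w₁)
  hspec : Adj w₁ w₂
  hproj : ∀ x y, Adj x y → f x = f y ∨ Adj' (f x) (f y)
  hlift : ∀ b c, Adj' b c → ∃ z z', f z = b ∧ f z' = c ∧ Adj z z'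
  hsrc1 : ∀ x, IsSource Adj Set.univ x → IsSource Adj' Set.univ (f x)
  hsrc2 : ∀ a, IsSource Adj' Set.univ a → ∃ x, f x = a ∧ IsSource Adj Set.univ x
  hstar : SRch Adj w₂ → SRch Adj w₁

namespace LiftData

variable {Adj : V₀ → V₀ → Prop} {Adj' : W₀ → W₀ → Prop} {f : V₀ → W₀} {w₁ w₂ : V₀}

lemma rtg_proj (hd : LiftData Adj Adj' f w₁ w₂) {x p : V₀} (h : Relation.ReflTransGen Adj x p) :
    Relation.ReflTransGen Adj' (f x) (f p) := by
  induction h with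
  | refl => exact Relation.ReflTransGen.refl
  | tail _ e ih =>
    rcases hd.hproj _ _ e with he | he
    · rwa [← he]
    · exact ih.tail he

lemma key (hd : LiftData Adj Adj' f w₁ w₂) {x : V₀} {c : W₀} (h : Relation.ReflTransGen Adj' (f x) c) :
    (∃ p, f p = c ∧ Relation.ReflTransGen Adj x p) ∨
    (Relation.ReflTransGen Adj x w₂ ∧ ∃ p, f p = c ∧ Relation.ReflTransGen Adj w₁ p) := by
  induction h with
  | refl => exact Or.inl ⟨x, rfl, Relation.ReflTransGen.refl⟩
  | @tail b c hb e ih =>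
    obtain ⟨z, z', hz, hz', hzz'⟩ := hd.hlift b c e
    rcases ih with ⟨q, hq, hxq⟩ | ⟨hxw, q, hq, hwq⟩
    · by_cases hzq : z = q
      · subst hzq; exact Or.inl ⟨z', hz', hxq.tail hzz'⟩
      · rcases hd.hfib z q (by rw [hz, hq]) hzq with ⟨rfl, rfl⟩ | ⟨rfl, rfl⟩
        · exact Or.inr ⟨hxq, z', hz', Relation.ReflTransGen.single hzz'⟩
        · exact Or.inl ⟨z', hz', (hxq.tail hd.hspec).tail hzz'⟩
    · by_cases hzq : z = q
      · subst hzq; exact Or.inr ⟨hxw, z', hz', hwq.tail hzz'⟩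
      · rcases hd.hfib z q (by rw [hz, hq]) hzq with ⟨rfl, rfl⟩ | ⟨rfl, rfl⟩
        · exact Or.inr ⟨hxw, z', hz', Relation.ReflTransGen.single hzz'⟩
        · exact Or.inr ⟨hxw, z', hz',
            (Relation.ReflTransGen.single hd.hspec).tail hzz'⟩

lemma injOn_sources (hd : LiftData Adj Adj' f w₁ w₂) {s : Set V₀} (hs : ∀ x ∈ s, IsSource Adj Set.univ x) :
    Set.InjOn f s := by
  intro x hx y hy hxy
  by_contra hne
  rcases hd.hfib x y hxy hne with ⟨rfl, rfl⟩ | ⟨rfl, rfl⟩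
  · exact (hs _ hy).2 x trivial hd.hspec
  · exact (hs _ hx).2 y trivial hd.hspec

lemma dtwLE_transfer (hd : LiftData Adj Adj' f w₁ w₂) {n : ℕ} (h : dtwLE Adj n) : dtwLE Adj' n := by
  obtain ⟨ι, D, hwid⟩ := h
  refine ⟨ι, ⟨D.tree, D.conn, D.acyc, fun i => f '' D.bags i, ?_, ?_, ?_⟩, ?_⟩
  · rintro i a ⟨x, hx, rfl⟩
    exact hd.hsrc1 x (D.bags_sources i x hx)
  · intro a ha
    obtain ⟨x, rfl, hx⟩ := hd.hsrc2 a ha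
    obtain ⟨i, hi⟩ := D.cover x hx
    exact ⟨i, ⟨x, hi, rfl⟩⟩
  · intro i k j hpath c hc
    obtain ⟨hci, hcj⟩ := hc
    rw [mem_reachSet_univ] at hci hcj
    obtain ⟨a, ⟨x, hxi, rfl⟩, hca⟩ := hci
    obtain ⟨b, ⟨y, hyj, rfl⟩, hcb⟩ := hcj
    rw [mem_reach_univ] at hca hcb
    have hRS : ∀ (l : ι) (z p : V₀), z ∈ D.bags l → Relation.ReflTransGen Adj z p →
        p ∈ ReachSet Adj Set.univ (D.bags l) := fun l z p hz hzp =>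
      mem_reachSet_univ.mpr ⟨z, hz, mem_reach_univ.mpr hzp⟩
    have final : ∀ p : V₀, p ∈ ReachSet Adj Set.univ (D.bags k) →
        Relation.ReflTransGen Adj' (f p) c →
        c ∈ ReachSet Adj' Set.univ (f '' D.bags k) := by
      intro p hp hpc
      rw [mem_reachSet_univ] at hp
      obtain ⟨z, hz, hzp⟩ := hp
      rw [mem_reach_univ] at hzp
      exact mem_reachSet_univ.mpr
        ⟨f z, ⟨z, hz, rfl⟩, mem_reach_univ.mpr ((hd.rtg_proj hzp).trans hpc)⟩
    have hw21 : Relation.ReflTransGen Adj' (f w₂) (f w₁) := by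
      rw [← hd.hf]
    have med : ∀ (i' j' : ι) (x' y' p : V₀), OnPath D.tree i' k j' → x' ∈ D.bags i' →
        y' ∈ D.bags j' → Relation.ReflTransGen Adj x' p → Relation.ReflTransGen Adj w₁ p →
        Relation.ReflTransGen Adj y' w₂ → Relation.ReflTransGen Adj' (f p) c →
        c ∈ ReachSet Adj' Set.univ (f '' D.bags k) := by
      intro i' j' x' y' p hpth hx' hy' hxp hw1p hyw2 hpc
      obtain ⟨z, hzsrc, hzw1⟩ := hd.hstar ⟨y', D.bags_sources j' y' hy', hyw2⟩
      obtain ⟨m, hm⟩ := D.cover z hzsrc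
      rcases onPath_median m hpth with hmed | hmed
      · exact final p
          (D.reach i' k m hmed ⟨hRS i' x' p hx' hxp, hRS m z p hm (hzw1.trans hw1p)⟩) hpc
      · refine final w₂
          (D.reach j' k m hmed ⟨hRS j' y' w₂ hy' hyw2, hRS m z w₂ hm (hzw1.tail hd.hspec)⟩) ?_
        exact (hw21.trans (hd.rtg_proj hw1p)).trans hpc
    rcases hd.key hca with ⟨p, rfl, hxp⟩ | ⟨hxw2, p, rfl, hw1p⟩
    · rcases hd.key hcb with ⟨q, hq, hyq⟩ | ⟨hyw2, q, hq, hw1q⟩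
      · by_cases hpq : q = p
        · subst hpq
          exact final q (D.reach i k j hpath ⟨hRS i x q hxi hxp, hRS j y q hyj hyq⟩)
            Relation.ReflTransGen.refl
        · rcases hd.hfib q p hq hpq with ⟨rfl, rfl⟩ | ⟨rfl, rfl⟩
          · exact final p (D.reach i k j hpath
              ⟨hRS i x p hxi hxp, hRS j y p hyj (hyq.tail hd.hspec)⟩)
              Relation.ReflTransGen.refl
          · exact final q (D.reach i k j hpath
              ⟨hRS i x q hxi (hxp.tail hd.hspec), hRS j y q hyj hyq⟩) hw21
      · by_cases hpq : q = p
        · subst hpq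
          exact med i j x y q hpath hxi hyj hxp hw1q hyw2 Relation.ReflTransGen.refl
        · rcases hd.hfib q p hq hpq with ⟨rfl, rfl⟩ | ⟨rfl, rfl⟩
          · exact final p (D.reach i k j hpath
              ⟨hRS i x p hxi hxp, hRS j y p hyj hyw2⟩) Relation.ReflTransGen.refl
          · exact final q (D.reach i k j hpath
              ⟨hRS i x q hxi (hxp.tail hd.hspec), hRS j y q hyj hyw2⟩) hw21
    · rcases hd.key hcb with ⟨q, hq, hyq⟩ | ⟨hyw2, q, hq, hw1q⟩
      · by_cases hpq : q = p
        · subst hpq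
          exact med j i y x q (onPath_symm hpath) hyj hxi hyq hw1p hxw2
            Relation.ReflTransGen.refl
        · rcases hd.hfib q p hq hpq with ⟨rfl, rfl⟩ | ⟨rfl, rfl⟩
          · exact final p (D.reach i k j hpath
              ⟨hRS i x p hxi hxw2, hRS j y p hyj (hyq.tail hd.hspec)⟩)
              Relation.ReflTransGen.refl
          · exact final q (D.reach i k j hpath
              ⟨hRS i x q hxi hxw2, hRS j y q hyj hyq⟩) hw21
      · exact final w₂ (D.reach i k j hpath
          ⟨hRS i x w₂ hxi hxw2, hRS j y w₂ hyj hyw2⟩)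
          (hw21.trans (hd.rtg_proj hw1p))
  · intro i
    rw [Set.ncard_image_of_injOn (hd.injOn_sources (D.bags_sources i))]
    exact hwid i

end LiftData

/-- A one-bag DAG tree decomposition always exists. -/
lemma dtwLE_sources (Adj : V₀ → V₀ → Prop) :
    dtwLE Adj ({x | IsSource Adj Set.univ x}.ncard) := by
  refine ⟨Unit, ⟨⊥, ?_, ?_, fun _ => {x | IsSource Adj Set.univ x}, ?_, ?_, ?_⟩, ?_⟩
  · exact SimpleGraph.Connected.mk
      (fun a b => by cases Subsingleton.elim a b; exact SimpleGraph.Reachable.refl a)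
  · intro x c hc
    cases c with
    | nil => exact hc.ne_nil rfl
    | cons h _ => exact h.elim
  · exact fun _ x hx => hx
  · exact fun s hs => ⟨(), hs⟩
  · exact fun i k j _ c hc => hc.1
  · exact fun _ => le_refl _

/-- The lifted orientation. -/
def liftAdj (H : SimpleGraph V₀) (Adj' : W₀ → W₀ → Prop) (f : V₀ → W₀) (w₁ w₂ : V₀) :
    V₀ → V₀ → Prop :=
  fun x y => (x = w₁ ∧ y = w₂) ∨ (H.Adj x y ∧ Adj' (f x) (f y))

/-- In-neighbour (lifting into the contracted pair) exists for `x`. -/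
def InP (H : SimpleGraph V₀) (Adj' : W₀ → W₀ → Prop) (f : V₀ → W₀) (u x : V₀) : Prop :=
  ∃ y, H.Adj y x ∧ Adj' (f y) (f u)

/-- The direction-independent lifted edge relation. -/
def Lrel (H : SimpleGraph V₀) (Adj' : W₀ → W₀ → Prop) (f : V₀ → W₀) : V₀ → V₀ → Prop :=
  fun x y => H.Adj x y ∧ Adj' (f x) (f y)

/-- Direction-independent sources outside the contracted pair. -/
def S0 (H : SimpleGraph V₀) (Adj' : W₀ → W₀ → Prop) (f : V₀ → W₀) (u v z : V₀) : Prop :=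
  z ≠ u ∧ z ≠ v ∧ ∀ y, ¬ Lrel H Adj' f y z

/-- Reachable from a direction-independent source via lifted edges. -/
def LRP (H : SimpleGraph V₀) (Adj' : W₀ → W₀ → Prop) (f : V₀ → W₀) (u v x : V₀) : Prop :=
  ∃ z, S0 H Adj' f u v z ∧ Relation.ReflTransGen (Lrel H Adj' f) z x

/-- Bundled context for the contraction construction. -/
structure CtxD (H : SimpleGraph V₀) (H' : SimpleGraph W₀) (f : V₀ → W₀) (u v : V₀)
    (Adj' : W₀ → W₀ → Prop) : Prop where
  hadj : H.Adj u v
  hfuv : f u = f v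
  hsurj : Function.Surjective f
  hfib : ∀ x y, f x = f y → x ≠ y → (x = u ∧ y = v) ∨ (x = v ∧ y = u)
  hiff : ∀ a b, H'.Adj a b ↔ a ≠ b ∧ ∃ x y, f x = a ∧ f y = b ∧ H.Adj x y
  hsub : ∀ a b, Adj' a b → H'.Adj a b
  hcov : ∀ a b, H'.Adj a b → Adj' a b ∨ Adj' b a
  hanti : ∀ a b, Adj' a b → ¬ Adj' b a
  hacy : Acyclic Adj'

namespace CtxD

variable {H : SimpleGraph V₀} {H' : SimpleGraph W₀} {f : V₀ → W₀} {u v : V₀}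
  {Adj' : W₀ → W₀ → Prop} {w₁ w₂ : V₀}

lemma hirr (hC : CtxD H H' f u v Adj') (a : W₀) : ¬ Adj' a a :=
  fun h => H'.irrefl (hC.hsub a a h)

section WithDir

variable (hC : CtxD H H' f u v Adj')
  (hw : (w₁ = u ∧ w₂ = v) ∨ (w₁ = v ∧ w₂ = u))

include hC hw

lemma vadj : H.Adj w₁ w₂ := by
  rcases hw with ⟨e1, e2⟩ | ⟨e1, e2⟩ <;> rw [e1, e2]
  · exact hC.hadj
  · exact hC.hadj.symm

lemma vne : w₁ ≠ w₂ := by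
  rcases hw with ⟨e1, e2⟩ | ⟨e1, e2⟩ <;> rw [e1, e2]
  · exact hC.hadj.ne
  · exact hC.hadj.ne.symm

lemma vfu1 : f w₁ = f u := by
  rcases hw with ⟨e1, -⟩ | ⟨e1, -⟩ <;> rw [e1]
  exact hC.hfuv.symm

lemma vfu2 : f w₂ = f u := by
  rcases hw with ⟨-, e2⟩ | ⟨-, e2⟩ <;> rw [e2]
  exact hC.hfuv.symm

lemma vf : f w₁ = f w₂ := (vfu1 hC hw).trans (vfu2 hC hw).symm

lemma vmem2 : w₂ = u ∨ w₂ = v := by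
  rcases hw with ⟨-, e2⟩ | ⟨-, e2⟩
  · exact Or.inr e2
  · exact Or.inl e2

lemma vfib : ∀ x y, f x = f y → x ≠ y → (x = w₁ ∧ y = w₂) ∨ (x = w₂ ∧ y = w₁) := by
  intro x y h1 h2
  rcases hw with ⟨e1, e2⟩ | ⟨e1, e2⟩ <;> rw [e1, e2]
  · exact hC.hfib x y h1 h2
  · exact (hC.hfib x y h1 h2).symm

lemma l_proj : ∀ x y, liftAdj H Adj' f w₁ w₂ x y → f x = f y ∨ Adj' (f x) (f y) := by
  rintro x y (⟨h1, h2⟩ | ⟨-, h⟩)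
  · exact Or.inl (by rw [h1, h2]; exact vf hC hw)
  · exact Or.inr h

lemma l_lift : ∀ b c, Adj' b c → ∃ z z', f z = b ∧ f z' = c ∧ liftAdj H Adj' f w₁ w₂ z z' := by
  intro b c e
  obtain ⟨-, x, y, hx, hy, hxy⟩ := (hC.hiff b c).mp (hC.hsub b c e)
  exact ⟨x, y, hx, hy, Or.inr ⟨hxy, by rw [hx, hy]; exact e⟩⟩

lemma l_src2 : ∀ a, IsSource Adj' Set.univ a →
    ∃ x, f x = a ∧ IsSource (liftAdj H Adj' f w₁ w₂) Set.univ x := by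
  intro a ha
  by_cases hA : a = f w₁
  · subst hA
    refine ⟨w₁, rfl, trivial, fun y _ hy => ?_⟩
    rcases hy with ⟨-, h2⟩ | ⟨-, h2⟩
    · exact vne hC hw h2
    · exact ha.2 (f y) trivial h2
  · obtain ⟨x, rfl⟩ := hC.hsurj a
    refine ⟨x, rfl, trivial, fun y _ hy => ?_⟩
    rcases hy with ⟨-, h2⟩ | ⟨-, h2⟩
    · exact hA (by rw [h2]; exact (vf hC hw).symm)
    · exact ha.2 (f y) trivial h2

lemma l_src1 (hP1 : InP H Adj' f u w₂ → InP H Adj' f u w₁) :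
    ∀ x, IsSource (liftAdj H Adj' f w₁ w₂) Set.univ x → IsSource Adj' Set.univ (f x) := by
  intro x hx
  refine ⟨trivial, fun b _ hb => ?_⟩
  obtain ⟨z, z', hz, hz', hzz'⟩ := l_lift hC hw b (f x) hb
  by_cases hzx : z' = x
  · subst hzx; exact hx.2 z trivial hzz'
  · rcases vfib hC hw z' x hz' hzx with ⟨h1, h2⟩ | ⟨h1, h2⟩
    · exact hx.2 w₁ trivial (Or.inl ⟨rfl, h2⟩)
    · rcases hzz' with ⟨g1, g2⟩ | ⟨g1, g2⟩
      · have hbfx : b = f x := by rw [← hz, g1, h2]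
        exact hirr hC (f x) (hbfx ▸ hb)
      · have hin2 : InP H Adj' f u w₂ :=
          ⟨z, h1 ▸ g1, by rw [← vfu2 hC hw, ← h1]; exact g2⟩
        obtain ⟨y, hy1, hy2⟩ := hP1 hin2
        refine absurd (hx.2 y trivial (Or.inr ⟨by rw [h2]; exact hy1, ?_⟩)) not_false
        rw [h2, vfu1 hC hw]; exact hy2

lemma l_orient : IsAcyclicOrientation H (liftAdj H Adj' f w₁ w₂) := by
  refine ⟨?_, ?_, ?_, ?_⟩
  · rintro x y (⟨h1, h2⟩ | ⟨h, -⟩)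
    · rw [h1, h2]; exact vadj hC hw
    · exact h
  · intro x y hxy
    by_cases hf : f x = f y
    · rcases vfib hC hw x y hf hxy.ne with ⟨h1, h2⟩ | ⟨h1, h2⟩
      · exact Or.inl (Or.inl ⟨h1, h2⟩)
      · exact Or.inr (Or.inl ⟨h2, h1⟩)
    · rcases hC.hcov _ _ ((hC.hiff _ _).mpr ⟨hf, x, y, rfl, rfl, hxy⟩) with h | h
      · exact Or.inl (Or.inr ⟨hxy, h⟩)
      · exact Or.inr (Or.inr ⟨hxy.symm, h⟩)
  · rintro x y (⟨h1, h2⟩ | ⟨h1, h2⟩) (⟨g1, g2⟩ | ⟨g1, g2⟩)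
    · exact vne hC hw (h1.symm.trans g2)
    · have : f y = f x := by rw [h1, h2, vf hC hw]
      exact hirr hC (f x) (this ▸ g2)
    · have : f x = f y := by rw [g2, g1, vf hC hw]
      exact hirr hC (f y) (this ▸ h2)
    · by_cases hf : f x = f y
      · exact hirr hC (f y) (hf ▸ h2)
      · exact hC.hanti _ _ h2 g2
  · have tg : ∀ x y, Relation.TransGen (liftAdj H Adj' f w₁ w₂) x y →
        Relation.TransGen Adj' (f x) (f y) ∨ (x = w₁ ∧ y = w₂) := by
      intro x y h
      induction h with
      | single e =>
        rcases e with ⟨h1, h2⟩ | ⟨-, h2⟩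
        · exact Or.inr ⟨h1, h2⟩
        · exact Or.inl (Relation.TransGen.single h2)
      | @tail b c hb e ih =>
        rcases ih with t | ⟨h1, h2⟩
        · rcases e with ⟨e1, e2⟩ | ⟨-, e2⟩
          · have : f b = f c := by rw [e1, e2]; exact vf hC hw
            exact Or.inl (this ▸ t)
          · exact Or.inl (t.tail e2)
        · rcases e with ⟨e1, e2⟩ | ⟨-, e2⟩
          · exact absurd (e1.symm.trans h2) (vne hC hw)
          · refine Or.inl ?_
            rw [h1, vf hC hw, ← h2]
            exact Relation.TransGen.single e2
    intro x hx
    rcases tg x x hx with t | ⟨h1, h2⟩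
    · exact hC.hacy (f x) t
    · exact vne hC hw (h1.symm.trans h2)

lemma l_C1 : ∀ z, S0 H Adj' f u v z → IsSource (liftAdj H Adj' f w₁ w₂) Set.univ z := by
  intro z hz
  refine ⟨trivial, fun y _ hy => ?_⟩
  rcases hy with ⟨-, h2⟩ | ⟨h1, h2⟩
  · rcases vmem2 hC hw with h | h
    · exact hz.1 (h2.trans h)
    · exact hz.2.1 (h2.trans h)
  · exact hz.2.2 y ⟨h1, h2⟩

lemma l_C3helper : ∀ z x, Relation.ReflTransGen (liftAdj H Adj' f w₁ w₂) z x →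
    Relation.ReflTransGen (Lrel H Adj' f) z x ∨
    Relation.ReflTransGen (liftAdj H Adj' f w₁ w₂) z w₁ := by
  intro z x h
  induction h with
  | refl => exact Or.inl Relation.ReflTransGen.refl
  | @tail b c hb e ih =>
    rcases ih with t | t
    · rcases e with ⟨e1, -⟩ | ⟨e1, e2⟩
      · refine Or.inr ?_
        rw [← e1]
        exact Relation.ReflTransGen.mono (fun a b h => Or.inr h) _ _ t
      · exact Or.inl (t.tail ⟨e1, e2⟩)
    · exact Or.inr t

lemma l_C3 : SRch (liftAdj H Adj' f w₁ w₂) w₂ →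
    LRP H Adj' f u v w₂ ∨ SRch (liftAdj H Adj' f w₁ w₂) w₁ := by
  rintro ⟨z, hzsrc, hzw⟩
  rcases l_C3helper hC hw z w₂ hzw with hL | hA
  · by_cases hz : S0 H Adj' f u v z
    · exact Or.inl ⟨z, hz, hL⟩
    · have hz2 : z = u ∨ z = v := by
        by_contra hc2
        obtain ⟨hc3, hc4⟩ := not_or.mp hc2
        exact hz ⟨hc3, hc4, fun y hy => hzsrc.2 y trivial (Or.inr hy)⟩
      have hzw2 : z ≠ w₂ := by
        intro h
        exact hzsrc.2 w₁ trivial (by rw [h]; exact Or.inl ⟨rfl, rfl⟩)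
      have hz1 : z = w₁ := by
        rcases hw with ⟨e1, e2⟩ | ⟨e1, e2⟩ <;> rcases hz2 with h | h
        · exact h.trans e1.symm
        · exact absurd (h.trans e2.symm) hzw2
        · exact absurd (h.trans e2.symm) hzw2
        · exact h.trans e1.symm
      refine Or.inr ⟨z, hzsrc, ?_⟩
      rw [hz1]
  · exact Or.inr ⟨z, hzsrc, hA⟩

lemma l_C4 : LRP H Adj' f u v w₁ → SRch (liftAdj H Adj' f w₁ w₂) w₁ := by
  rintro ⟨z, hz, hL⟩
  exact ⟨z, l_C1 hC hw z hz, Relation.ReflTransGen.mono (fun a b h => Or.inr h) _ _ hL⟩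

end WithDir

lemma l_C6 (hC : CtxD H H' f u v Adj') {x : V₀} (hx : x = u ∨ x = v)
    (hni : ¬ InP H Adj' f u x) : ¬ LRP H Adj' f u v x := by
  rintro ⟨z, hz, hL⟩
  rcases hL.cases_tail with h | ⟨c, -, hcx⟩
  · rcases hx with h2 | h2
    · exact hz.1 (h.symm.trans h2)
    · exact hz.2.1 (h.symm.trans h2)
  · have hfx : f x = f u := by
      rcases hx with h | h <;> rw [h]
      exact hC.hfuv.symm
    exact hni ⟨c, hcx.1, by rw [← hfx]; exact hcx.2⟩

lemma l_good (hC : CtxD H H' f u v Adj') :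
    ∃ w₁ w₂ : V₀, ((w₁ = u ∧ w₂ = v) ∨ (w₁ = v ∧ w₂ = u)) ∧
      (InP H Adj' f u w₂ → InP H Adj' f u w₁) ∧
      (SRch (liftAdj H Adj' f w₁ w₂) w₂ → SRch (liftAdj H Adj' f w₁ w₂) w₁) := by
  have hwuv : ((u : V₀) = u ∧ v = v) ∨ (u = v ∧ v = u) := Or.inl ⟨rfl, rfl⟩
  have hwvu : ((v : V₀) = u ∧ u = v) ∨ (v = v ∧ u = u) := Or.inr ⟨rfl, rfl⟩
  by_cases Iu : InP H Adj' f u u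
  · by_cases Iv : InP H Adj' f u v
    · by_cases Lu : LRP H Adj' f u v u
      · exact ⟨u, v, hwuv, fun _ => Iu, fun _ => l_C4 hC hwuv Lu⟩
      · by_cases Lv : LRP H Adj' f u v v
        · exact ⟨v, u, hwvu, fun _ => Iv, fun _ => l_C4 hC hwvu Lv⟩
        · exact ⟨u, v, hwuv, fun _ => Iu, fun h => (l_C3 hC hwuv h).resolve_left Lv⟩
    · exact ⟨u, v, hwuv, fun _ => Iu,
        fun h => (l_C3 hC hwuv h).resolve_left (l_C6 hC (Or.inr rfl) Iv)⟩
  · by_cases Iv : InP H Adj' f u v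
    · exact ⟨v, u, hwvu, fun _ => Iv,
        fun h => (l_C3 hC hwvu h).resolve_left (l_C6 hC (Or.inl rfl) Iu)⟩
    · exact ⟨u, v, hwuv, fun h => absurd h Iv,
        fun h => (l_C3 hC hwuv h).resolve_left (l_C6 hC (Or.inr rfl) Iv)⟩

end CtxD

end Statement12Aux

/-- contracting one edge does not increase the (undirected) DAG treewidth:
every acyclic orientation of the contracted graph is dominated by some acyclic
orientation of the original graph. -/
theorem dtw_edge_contraction_le {V W : Type*} (H : SimpleGraph V) (H' : SimpleGraph W)
    (f : V → W) (u v : V) (hc : IsEdgeContraction H H' f u v)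
    (Adj' : W → W → Prop) (h' : IsAcyclicOrientation H' Adj') :
    ∃ Adj : V → V → Prop, IsAcyclicOrientation H Adj ∧ dtw Adj' ≤ dtw Adj := by
  obtain ⟨hadj, hfuv, hsurj, hfib, hiff⟩ := hc
  obtain ⟨hsub, hcov, hanti, hacy⟩ := h'
  have hC : CtxD H H' f u v Adj' :=
    ⟨hadj, hfuv, hsurj, hfib, hiff, hsub, hcov, hanti, hacy⟩
  obtain ⟨w₁, w₂, hw, hP1, hstar⟩ := CtxD.l_good hC
  refine ⟨liftAdj H Adj' f w₁ w₂, CtxD.l_orient hC hw, ?_⟩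
  have hd : LiftData (liftAdj H Adj' f w₁ w₂) Adj' f w₁ w₂ :=
    ⟨CtxD.vne hC hw, CtxD.vf hC hw, CtxD.vfib hC hw, Or.inl ⟨rfl, rfl⟩,
     CtxD.l_proj hC hw, CtxD.l_lift hC hw, CtxD.l_src1 hC hw hP1,
     CtxD.l_src2 hC hw, hstar⟩
  have hne : {n | dtwLE (liftAdj H Adj' f w₁ w₂) n}.Nonempty := ⟨_, dtwLE_sources _⟩
  unfold dtw
  exact csInf_le_csInf (OrderBot.bddBelow _) hne (fun n hn => hd.dtwLE_transfer hn)

end DagPaper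
end

section
/- For every acyclic orientation of an undirected graph H, the DAG treewidth of the resulting DAG is at most tw(H) + 1, where tw(H) is the treewidth of H. -/
open Set

namespace DagPaper

variable {V : Type*}

/-! ### Auxiliary material for Statement 13 -/

open Classical in
/-- Canonical source assignment: follow an in-neighbor while one exists. -/
noncomputable def srcFun (Adj : V → V → Prop)
    (wf : WellFounded (fun a b => Adj a b)) : V → V :=
  wf.fix (fun v ih => if h : ∃ u, Adj u v then ih h.choose h.choose_spec else v)

open Classical in
lemma srcFun_eq (Adj : V → V → Prop) (wf : WellFounded (fun a b => Adj a b)) (v : V) :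
    srcFun Adj wf v =
      if h : ∃ u, Adj u v then srcFun Adj wf h.choose else v := by
  unfold srcFun
  rw [WellFounded.fix_eq]

lemma srcFun_isSource (Adj : V → V → Prop) (wf : WellFounded (fun a b => Adj a b)) (v : V) :
    IsSource Adj Set.univ (srcFun Adj wf v) := by
  refine wf.induction (C := fun v => IsSource Adj Set.univ (srcFun Adj wf v)) v ?_
  intro x ih
  by_cases h : ∃ u, Adj u x
  · rw [srcFun_eq, dif_pos h]
    exact ih h.choose h.choose_spec
  · rw [srcFun_eq, dif_neg h]
    exact ⟨Set.mem_univ _, fun u _ hu => h ⟨u, hu⟩⟩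

lemma srcFun_reach (Adj : V → V → Prop) (wf : WellFounded (fun a b => Adj a b)) (v : V) :
    Relation.ReflTransGen (restrAdj Adj Set.univ) (srcFun Adj wf v) v := by
  refine wf.induction
    (C := fun v => Relation.ReflTransGen (restrAdj Adj Set.univ) (srcFun Adj wf v) v) v ?_
  intro x ih
  by_cases h : ∃ u, Adj u x
  · rw [srcFun_eq, dif_pos h]
    exact (ih h.choose h.choose_spec).tail ⟨Set.mem_univ _, Set.mem_univ _, h.choose_spec⟩
  · rw [srcFun_eq, dif_neg h]

lemma srcFun_chain (Adj : V → V → Prop) (wf : WellFounded (fun a b => Adj a b)) (v : V) :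
    Relation.ReflTransGen (fun p q => srcFun Adj wf p = srcFun Adj wf q ∧ Adj q p)
      v (srcFun Adj wf v) := by
  refine wf.induction
    (C := fun v => Relation.ReflTransGen (fun p q => srcFun Adj wf p = srcFun Adj wf q ∧ Adj q p)
      v (srcFun Adj wf v)) v ?_
  intro x ih
  by_cases h : ∃ u, Adj u x
  · have he : srcFun Adj wf x = srcFun Adj wf h.choose := by
      rw [srcFun_eq, dif_pos h]
    refine Relation.ReflTransGen.head ⟨he, h.choose_spec⟩ ?_
    rw [he]
    exact ih h.choose h.choose_spec
  · rw [srcFun_eq, dif_neg h]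

/-- Separator property of tree decompositions: if `k` lies on the tree path
between `i` and `j`, any walk (within a set `P`) from a vertex of `bags i` to a
vertex of `bags j` meets `bags k` in a vertex of `P`. -/
lemma sep_lemma {ι : Type} (G : SimpleGraph V) (D : TreeDecomp G ι) (P : Set V)
    {i k j : ι} {a b : V}
    (hab : Relation.ReflTransGen (fun p q => p ∈ P ∧ q ∈ P ∧ G.Adj p q) a b)
    (hk : OnPath D.tree i k j) (ha : a ∈ D.bags i) (hb : b ∈ D.bags j)
    (haP : a ∈ P) : ∃ w ∈ P, w ∈ D.bags k := by
  induction hab generalizing j with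
  | refl => exact ⟨a, haP, D.vconn a i k j ha hb hk⟩
  | @tail b' b hab' hstep ih =>
    obtain ⟨hb'P, hbP, hG⟩ := hstep
    obtain ⟨j', hb'j', hbj'⟩ := D.ecover b' b hG
    by_cases hkj' : OnPath D.tree i k j'
    · exact ih hkj' hb'j'
    · have hk2 : OnPath D.tree j' k j := by
        obtain ⟨p, hp⟩ := not_forall.mp hkj'
        intro r
        have := hk (p.append r)
        rw [SimpleGraph.Walk.support_append] at this
        rcases List.mem_append.mp this with h1 | h2
        · exact absurd h1 hp
        · exact List.mem_of_mem_tail h2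
      exact ⟨b, hbP, D.vconn b j' k j hbj' hb hk2⟩

/-- The one-bag tree decomposition shows `twLE G (Fintype.card V)`. -/
lemma twLE_card [Fintype V] (G : SimpleGraph V) : twLE G (Fintype.card V) := by
  refine ⟨Unit,
    { tree := ⊥
      conn := ⟨fun a b => by
        rw [Subsingleton.elim a b]⟩
      acyc := SimpleGraph.isAcyclic_bot
      bags := fun _ => Set.univ
      vcover := fun v => ⟨(), Set.mem_univ v⟩
      ecover := fun u v _ => ⟨(), Set.mem_univ u, Set.mem_univ v⟩
      vconn := fun v _ _ _ _ _ _ => Set.mem_univ v }, ?_⟩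
  intro _
  simp only [Set.ncard_univ, Nat.card_eq_fintype_card]
  omega

/-- for every acyclic orientation of `G`, the DAG treewidth of the
resulting DAG is at most tw(G) + 1. -/
theorem dtw_le_tw_succ {V : Type*} [Fintype V] (G : SimpleGraph V)
    (Adj : V → V → Prop) (h : IsAcyclicOrientation G Adj) :
    dtw Adj ≤ tw G + 1 := by
  classical
  -- Well-foundedness of the in-edge relation
  have wfT : WellFounded (Relation.TransGen Adj) := by
    have h1 : IsTrans V (Relation.TransGen Adj) := ⟨fun a b c hab hbc => hab.trans hbc⟩
    have h2 : IsIrrefl V (Relation.TransGen Adj) := ⟨h.acyclic⟩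
    exact Finite.wellFounded_of_trans_of_irrefl _
  have wf : WellFounded (fun a b => Adj a b) :=
    Subrelation.wf (fun hab => Relation.TransGen.single hab) wfT
  set σ : V → V := srcFun Adj wf with hσdef
  -- An optimal tree decomposition of G
  have hne : {w | twLE G w}.Nonempty := ⟨Fintype.card V, twLE_card G⟩
  have htw : twLE G (tw G) := Nat.sInf_mem hne
  obtain ⟨ι, D, hD⟩ := htw
  -- σ of a source is itself
  have hσ_src : ∀ s : V, IsSource Adj Set.univ s → σ s = s := by
    intro s hs
    rw [hσdef, srcFun_eq, dif_neg]
    rintro ⟨u, hu⟩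
    exact hs.2 u (Set.mem_univ u) hu
  refine Nat.sInf_le ⟨ι,
    { tree := D.tree
      conn := D.conn
      acyc := D.acyc
      bags := fun i => σ '' D.bags i
      bags_sources := ?_
      cover := ?_
      reach := ?_ }, ?_⟩
  · rintro i v ⟨x, -, rfl⟩
    exact srcFun_isSource Adj wf x
  · intro v hv
    obtain ⟨i, hi⟩ := D.vcover v
    exact ⟨i, ⟨v, hi, hσ_src v hv⟩⟩
  · intro i k j hk u hu
    -- the set of vertices whose canonical source reaches u
    set P : Set V := {w | Relation.ReflTransGen (restrAdj Adj Set.univ) (σ w) u} with hPdef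
    have memP : ∀ w : V, w ∈ P ↔ Relation.ReflTransGen (restrAdj Adj Set.univ) (σ w) u := by
      intro w; rfl
    have F1 : ∀ w : V, Relation.ReflTransGen (restrAdj Adj Set.univ) w u → w ∈ P := by
      intro w hw
      exact (srcFun_reach Adj wf w).trans hw
    -- symmetrized adjacency restricted to P
    set RP : V → V → Prop := fun p q => p ∈ P ∧ q ∈ P ∧ G.Adj p q with hRPdef
    have hRPsymm : Symmetric RP := by
      rintro p q ⟨hp, hq, hpq⟩; exact ⟨hq, hp, hpq.symm⟩
    -- directed paths to u lie in P
    have F3 : ∀ x : V, Relation.ReflTransGen (restrAdj Adj Set.univ) x u →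
        Relation.ReflTransGen RP x u := by
      intro x hx
      induction hx using Relation.ReflTransGen.head_induction_on with
      | refl => exact Relation.ReflTransGen.refl
      | head h' hcu ih =>
        rename_i a c
        refine Relation.ReflTransGen.head ?_ ih
        exact ⟨F1 a (hcu.head h'), F1 c hcu, h.subset a c h'.2.2⟩
    -- the chain from x down to σ x lies in P if x ∈ P
    have Fchain : ∀ x y : V,
        Relation.ReflTransGen (fun p q => σ p = σ q ∧ Adj q p) x y →
        x ∈ P → σ x = σ y ∧ Relation.ReflTransGen RP x y := by
      intro x y hxy hx
      induction hxy with
      | refl => exact ⟨rfl, Relation.ReflTransGen.refl⟩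
      | @tail b c hxb hbc ih =>
        obtain ⟨hσxb, hrtg⟩ := ih
        have hσxc : σ x = σ c := hσxb.trans hbc.1
        have hbP : b ∈ P := by
          rw [memP, ← hσxb]; exact hx
        have hcP : c ∈ P := by
          rw [memP, ← hσxc]; exact hx
        exact ⟨hσxc, hrtg.tail ⟨hbP, hcP, (h.subset c b hbc.2).symm⟩⟩
    -- every vertex of P is RP-connected to u
    have F2 : ∀ x : V, x ∈ P → Relation.ReflTransGen RP x u := by
      intro x hx
      have hchain := Fchain x (σ x) (srcFun_chain Adj wf x) hx
      have hσσ : σ (σ x) = σ x := hσ_src (σ x) (srcFun_isSource Adj wf x)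
      have hσxP : σ x ∈ P := by
        rw [memP, hσσ]; exact hx
      exact hchain.2.trans (F3 (σ x) hx)
    -- extract witnesses from hu
    obtain ⟨hui, huj⟩ := hu
    simp only [ReachSet, Set.mem_iUnion, exists_prop] at hui huj
    obtain ⟨sa, ⟨a, hai, rfl⟩, hau⟩ := hui
    obtain ⟨sb, ⟨b, hbj, rfl⟩, hbu⟩ := huj
    have haP : a ∈ P := hau
    have hbP : b ∈ P := hbu
    -- an RP-walk from a to b
    have hab : Relation.ReflTransGen RP a b :=
      (F2 a haP).trans ((@Relation.ReflTransGen.symmetric _ _ ⟨fun a b => @hRPsymm a b⟩).symm _ _ (F2 b hbP))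
    obtain ⟨w, hwP, hwk⟩ := sep_lemma G D P hab hk hai hbj haP
    simp only [ReachSet, Set.mem_iUnion, exists_prop]
    exact ⟨σ w, ⟨w, hwk, rfl⟩, hwP⟩
  · intro i
    exact le_trans (Set.ncard_image_le (Set.toFinite _)) (hD i)

end DagPaper
end
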